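/- arXiv:1007.5216 — 8 statements merged into one kernel-verified Lean document; each statement's English description precedes it below -/
import Mathlib

section
/- Let E be a Euclidean vector space and Z ⊆ E a convex compact polytope. For every nonempty face F of Z define the normal cone N(F) = {v ∈ E : ⟨v,x⟩ = max_{y∈Z} ⟨v,y⟩ for all x ∈ F}. Then E is the disjoint union over nonempty faces F of Z of the sets relint(F) + N(F), and if x = f + n with f ∈ relint(F) and n ∈ N(F), then the closest-point projection of x onto Z equals f. -/
open scoped Pointwise

/-- Normal cone of a subset `F` of the polytope `Z`:
`{v | ⟨v,x⟩ = max_{y ∈ Z} ⟨v,y⟩ for all x ∈ F}`. -/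
def normalCone {E : Type*} [NormedAddCommGroup E] [InnerProductSpace ℝ E]
    (Z F : Set E) : Set E :=
  {v : E | ∀ x ∈ F, ∀ y ∈ Z, (inner ℝ v y : ℝ) ≤ (inner ℝ v x : ℝ)}

open scoped RealInnerProductSpace
open Metric Set Filter

section Helpers

variable {E : Type*} [NormedAddCommGroup E] [InnerProductSpace ℝ E]

lemma ball_of_mem_intrinsic {C : Set E} {x : E} (hx : x ∈ intrinsicInterior ℝ C) :
    ∃ ε > 0, ∀ a ∈ affineSpan ℝ C, ‖a - x‖ < ε → a ∈ C := by
  obtain ⟨q, hq, rfl⟩ := hx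
  rw [mem_interior_iff_mem_nhds, mem_nhds_subtype] at hq
  obtain ⟨t, ht, hsub⟩ := hq
  obtain ⟨ε, hε, hball⟩ := Metric.mem_nhds_iff.1 ht
  refine ⟨ε, hε, fun a ha hnorm => ?_⟩
  have : (⟨a, ha⟩ : affineSpan ℝ C) ∈ (Subtype.val) ⁻¹' t := by
    apply mem_preimage.2
    apply hball
    simpa [Metric.mem_ball, dist_eq_norm] using hnorm
  exact hsub this

lemma mem_intrinsic_of_ball {C : Set E} {x : E} (hx : x ∈ affineSpan ℝ C) {ε : ℝ} (hε : 0 < ε)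
    (H : ∀ a ∈ affineSpan ℝ C, ‖a - x‖ < ε → a ∈ C) : x ∈ intrinsicInterior ℝ C := by
  refine ⟨⟨x, hx⟩, ?_, rfl⟩
  rw [mem_interior_iff_mem_nhds, mem_nhds_subtype]
  exact ⟨Metric.ball x ε, Metric.ball_mem_nhds _ hε,
    fun a ha => H a a.2 (by simpa [Metric.mem_ball, dist_eq_norm] using ha)⟩

lemma extend_relint {F : Set E} {p z : E} (hp : p ∈ intrinsicInterior ℝ F) (hz : z ∈ F) :
    ∃ t : ℝ, 0 < t ∧ p + t • (p - z) ∈ F := by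
  obtain ⟨ε, hε, H⟩ := ball_of_mem_intrinsic hp
  have hpF : p ∈ F := intrinsicInterior_subset hp
  have hpA : p ∈ affineSpan ℝ F := subset_affineSpan ℝ F hpF
  have hzA : z ∈ affineSpan ℝ F := subset_affineSpan ℝ F hz
  set t : ℝ := min 1 (ε / (2 * (‖p - z‖ + 1))) with htdef
  have hpos : 0 < t := lt_min one_pos (by positivity)
  refine ⟨t, hpos, ?_⟩
  apply H
  · have hmem : t • (p - z) ∈ (affineSpan ℝ F).direction :=
      Submodule.smul_mem _ _ (AffineSubspace.vsub_mem_direction hpA hzA)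
    have := AffineSubspace.vadd_mem_of_mem_direction hmem hpA
    simpa [vadd_eq_add, add_comm] using this
  · have h1 : ‖p + t • (p - z) - p‖ = t * ‖p - z‖ := by
      simp [norm_smul, abs_of_pos hpos]
    rw [h1]
    have h2 : t ≤ ε / (2 * (‖p - z‖ + 1)) := min_le_right _ _
    have h3 : 0 ≤ ‖p - z‖ := norm_nonneg _
    have h4 : ε / (2 * (‖p - z‖ + 1)) * ‖p - z‖ < ε := by
      rw [div_mul_eq_mul_div, div_lt_iff₀ (by positivity)]
      nlinarith
    calc t * ‖p - z‖ ≤ ε / (2 * (‖p - z‖ + 1)) * ‖p - z‖ := by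
          apply mul_le_mul_of_nonneg_right h2 h3
      _ < ε := h4

lemma supporting [FiniteDimensional ℝ E] {C : Set E} (hC : Convex ℝ C) {p : E} (hp : p ∈ C)
    (hnot : p ∉ intrinsicInterior ℝ C) :
    ∃ v : E, (∀ y ∈ C, ⟪v, y⟫ ≤ ⟪v, p⟫) ∧ ∃ y ∈ C, ⟪v, y⟫ < ⟪v, p⟫ := by
  classical
  set V : Submodule ℝ E := (affineSpan ℝ C).direction with hVdef
  have hpA : p ∈ affineSpan ℝ C := subset_affineSpan ℝ C hp
  set D : Set V := {w : V | (w : E) + p ∈ C} with hDdef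
  have hDconv : Convex ℝ D := by
    intro w₁ h₁ w₂ h₂ a b ha hb hab
    have h := hC h₁ h₂ ha hb hab
    have heq : a • ((w₁ : E) + p) + b • ((w₂ : E) + p)
        = ((a • w₁ + b • w₂ : V) : E) + p := by
      push_cast
      rw [smul_add, smul_add]
      rw [← add_assoc, add_assoc (a • (w₁:E)), add_comm (a • p), ← add_assoc, add_assoc]
      rw [← add_smul, hab, one_smul]
    rw [heq] at h
    exact h
  -- interior of D is nonempty
  obtain ⟨c₀, hc₀⟩ := Set.Nonempty.intrinsicInterior hC ⟨p, hp⟩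
  have hc₀C : c₀ ∈ C := intrinsicInterior_subset hc₀
  have hc₀A : c₀ ∈ affineSpan ℝ C := subset_affineSpan ℝ C hc₀C
  set w₀ : V := ⟨c₀ - p, AffineSubspace.vsub_mem_direction hc₀A hpA⟩ with hw₀def
  obtain ⟨ε, hε, H⟩ := ball_of_mem_intrinsic hc₀
  have hw₀int : w₀ ∈ interior D := by
    rw [mem_interior_iff_mem_nhds, Metric.mem_nhds_iff]
    refine ⟨ε, hε, fun w hw => ?_⟩
    have hwA : (w : E) + p ∈ affineSpan ℝ C := by
      have := AffineSubspace.vadd_mem_of_mem_direction w.2 hpA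
      simpa [vadd_eq_add] using this
    apply H _ hwA
    have : (w : E) + p - c₀ = ((w - w₀ : V) : E) := by
      push_cast [hw₀def]
      abel
    rw [this]
    have := mem_ball_iff_norm.1 hw
    calc ‖((w - w₀ : V) : E)‖ = ‖w - w₀‖ := rfl
      _ < ε := this
  -- 0 ∉ interior D
  have h0D : (0 : V) ∈ D := by simp [hDdef, hp]
  have h0not : (0 : V) ∉ interior D := by
    intro h0
    apply hnot
    rw [mem_interior_iff_mem_nhds, Metric.mem_nhds_iff] at h0
    obtain ⟨δ, hδ, hball⟩ := h0
    apply mem_intrinsic_of_ball hpA hδ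
    intro a ha hnorm
    have hmem : a - p ∈ V := AffineSubspace.vsub_mem_direction ha hpA
    have : (⟨a - p, hmem⟩ : V) ∈ Metric.ball (0 : V) δ := by
      rw [mem_ball_iff_norm]
      simpa using hnorm
    have := hball this
    simpa [hDdef] using this
  -- separate
  obtain ⟨f, hf⟩ := geometric_hahn_banach_open_point (hDconv.interior) isOpen_interior h0not
  -- f ≤ f 0 = 0 on D by limiting argument
  have hfle : ∀ w ∈ D, f w ≤ f 0 := by
    intro w hw
    have key : ∀ t : ℝ, t ∈ Set.Ioo (0:ℝ) 1 → f ((1 - t) • w + t • w₀) < f 0 := by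
      intro t ht
      apply hf
      exact hDconv.combo_closure_interior_mem_interior (subset_closure hw) hw₀int
        (by linarith [ht.2]) ht.1 (by ring)
    have hcont : Continuous fun t : ℝ => (1 - t) • w + t • w₀ :=
      ((continuous_const.sub continuous_id).smul continuous_const).add
        (continuous_id.smul continuous_const)
    have hcont2 : Continuous fun t : ℝ => f ((1 - t) • w + t • w₀) :=
      f.continuous.comp hcont
    have htend : Filter.Tendsto (fun t : ℝ => f ((1 - t) • w + t • w₀))
        (nhdsWithin 0 (Set.Ioi 0)) (nhds (f w)) := by
      simpa using (hcont2.continuousAt (x := (0:ℝ))).tendsto.mono_left nhdsWithin_le_nhds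
    refine le_of_tendsto htend ?_
    filter_upwards [Ioo_mem_nhdsGT_of_mem (by norm_num : (0:ℝ) ∈ Set.Ico (0:ℝ) 1)] with t ht
    exact (key t ht).le
  -- convert f to a vector via orthogonal projection and dual
  set g : E →L[ℝ] ℝ := f.comp (Submodule.orthogonalProjectionOnto V) with hgdef
  set v : E := (InnerProductSpace.toDual ℝ E).symm g with hvdef
  have hvapp : ∀ x : E, ⟪v, x⟫ = g x := fun x => InnerProductSpace.toDual_symm_apply
  have hproj : ∀ w : V, g (w : E) = f w := by
    intro w
    simp [hgdef, Submodule.orthogonalProjectionOnto_mem_subspace_eq_self]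
  refine ⟨v, fun y hy => ?_, ⟨(w₀ : E) + p, ?_, ?_⟩⟩
  · have hmem : y - p ∈ V := AffineSubspace.vsub_mem_direction (subset_affineSpan ℝ C hy) hpA
    have hyD : (⟨y - p, hmem⟩ : V) ∈ D := by simp [hDdef, hy]
    have := hfle _ hyD
    have h2 : ⟪v, y⟫ - ⟪v, p⟫ = f (⟨y - p, hmem⟩ : V) := by
      rw [hvapp, hvapp, ← map_sub, ← hproj]
    simp only [map_zero] at this
    linarith [h2 ▸ this]
  · simpa [hw₀def, sub_add_cancel] using hc₀C
  · have hw₀D : w₀ ∈ D := interior_subset hw₀int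
    have hlt := hf w₀ hw₀int
    simp only [map_zero] at hlt
    have h2 : ⟪v, (w₀ : E) + p⟫ - ⟪v, p⟫ = f w₀ := by
      rw [hvapp, hvapp, ← map_sub, add_sub_cancel_right, ← hproj]
    linarith [h2 ▸ hlt]

noncomputable def amax (S : Finset E) (v : E) : Finset E :=
  S.filter (fun s => ∀ t ∈ S, ⟪v, t⟫ ≤ ⟪v, s⟫)

lemma mem_amax {S : Finset E} {v s : E} :
    s ∈ amax S v ↔ s ∈ S ∧ ∀ t ∈ S, ⟪v, t⟫ ≤ ⟪v, s⟫ := Finset.mem_filter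

lemma amax_subset {S : Finset E} {v : E} : amax S v ⊆ S := Finset.filter_subset _ _

lemma amax_nonempty {S : Finset E} (hS : S.Nonempty) (v : E) : (amax S v).Nonempty := by
  obtain ⟨s₀, hs₀S, hmax⟩ := S.exists_max_image (fun s => ⟪v, s⟫) hS
  exact ⟨s₀, mem_amax.2 ⟨hs₀S, hmax⟩⟩

lemma argmax_hull (S : Finset E) (hS : S.Nonempty) (v : E) :
    {z ∈ convexHull ℝ (S : Set E) | ∀ y ∈ convexHull ℝ (S : Set E), ⟪v, y⟫ ≤ ⟪v, z⟫}
      = convexHull ℝ ((amax S v : Finset E) : Set E) := by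
  classical
  obtain ⟨s₀, hs₀S, hs₀max⟩ := S.exists_max_image (fun s => ⟪v, s⟫) hS
  have hs₀am : s₀ ∈ amax S v := mem_amax.2 ⟨hs₀S, hs₀max⟩
  have hup : ∀ y ∈ convexHull ℝ (S : Set E), ⟪v, y⟫ ≤ ⟪v, s₀⟫ := by
    intro y hy
    have hsub : convexHull ℝ (S : Set E) ⊆ {y : E | ⟪v, y⟫ ≤ ⟪v, s₀⟫} := by
      apply convexHull_min
      · intro s hs; exact hs₀max s hs
      · exact (convex_Iic (⟪v, s₀⟫)).linear_preimage (innerSL ℝ v).toLinearMap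
    exact hsub hy
  apply Set.Subset.antisymm
  · rintro z ⟨hz, hmax⟩
    have hzeq : ⟪v, z⟫ = ⟪v, s₀⟫ :=
      le_antisymm (hup z hz) (hmax s₀ (subset_convexHull ℝ (S : Set E) hs₀S))
    rw [Finset.convexHull_eq] at hz ⊢
    obtain ⟨w, hw0, hw1, hwz⟩ := hz
    have hinner : ⟪v, z⟫ = ∑ y ∈ S, w y * ⟪v, y⟫ := by
      rw [← hwz, Finset.centerMass_eq_of_sum_1 _ _ hw1]
      simp [inner_sum, real_inner_smul_right]
    have hsum0 : ∑ y ∈ S, w y * (⟪v, s₀⟫ - ⟪v, y⟫) = 0 := by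
      have : ∑ y ∈ S, w y * (⟪v, s₀⟫ - ⟪v, y⟫)
          = (∑ y ∈ S, w y) * ⟪v, s₀⟫ - ∑ y ∈ S, w y * ⟪v, y⟫ := by
        rw [Finset.sum_mul, ← Finset.sum_sub_distrib]
        congr 1; ext y; ring
      rw [this, hw1, one_mul, ← hinner, hzeq, sub_self]
    have hzero : ∀ y ∈ S, w y * (⟪v, s₀⟫ - ⟪v, y⟫) = 0 := by
      refine (Finset.sum_eq_zero_iff_of_nonneg ?_).1 hsum0
      intro y hy
      have := hup y (subset_convexHull ℝ (S : Set E) hy)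
      have := hw0 y hy
      nlinarith
    have hwa : ∀ y ∈ S, y ∉ amax S v → w y = 0 := by
      intro y hy hyn
      by_contra hwne
      apply hyn
      have heq : ⟪v, y⟫ = ⟪v, s₀⟫ := by
        have := hzero y hy
        rcases mul_eq_zero.1 this with h | h
        · exact absurd h hwne
        · linarith
      exact mem_amax.2 ⟨hy, fun t ht => heq ▸ hs₀max t ht⟩
    refine ⟨w, fun y hy => hw0 y (amax_subset hy), ?_, ?_⟩
    · rw [Finset.sum_subset amax_subset hwa, hw1]
    · have hsum1 : ∑ y ∈ amax S v, w y = 1 := by rw [Finset.sum_subset amax_subset hwa, hw1]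
      rw [Finset.centerMass_eq_of_sum_1 _ _ hsum1, ← hwz,
        Finset.centerMass_eq_of_sum_1 _ _ hw1]
      apply Finset.sum_subset amax_subset
      intro y hy hyn
      rw [hwa y hy hyn, zero_smul]
  · intro z hz
    have hzS : z ∈ convexHull ℝ (S : Set E) :=
      convexHull_mono (by exact_mod_cast amax_subset) hz
    have hplane : z ∈ {y : E | ⟪v, y⟫ = ⟪v, s₀⟫} := by
      apply convexHull_min ?_ ?_ hz
      · intro s hs
        obtain ⟨hsS, hsmax⟩ := mem_amax.1 hs
        exact le_antisymm (hs₀max s hsS) (hsmax s₀ hs₀S)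
      · exact (convex_singleton (⟪v, s₀⟫)).linear_preimage (innerSL ℝ v).toLinearMap
    exact ⟨hzS, fun y hy => by rw [Set.mem_setOf_eq] at hplane; rw [hplane]; exact hup y hy⟩

lemma key [FiniteDimensional ℝ E] :
    ∀ (n : ℕ) (S : Finset E), S.card ≤ n → S.Nonempty →
      ∀ p ∈ convexHull ℝ (S : Set E), ∃ v : E,
        p ∈ intrinsicInterior ℝ
          {z ∈ convexHull ℝ (S : Set E) | ∀ y ∈ convexHull ℝ (S : Set E), ⟪v, y⟫ ≤ ⟪v, z⟫} := by
  intro n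
  induction n with
  | zero =>
    intro S hcard hS p hp
    exact absurd (Finset.card_eq_zero.1 (Nat.le_zero.1 hcard)) hS.ne_empty
  | succ n ih =>
    intro S hcard hS p hp
    by_cases hint : p ∈ intrinsicInterior ℝ (convexHull ℝ (S : Set E))
    · refine ⟨0, ?_⟩
      have : {z ∈ convexHull ℝ (S : Set E) |
          ∀ y ∈ convexHull ℝ (S : Set E), ⟪(0:E), y⟫ ≤ ⟪(0:E), z⟫}
          = convexHull ℝ (S : Set E) := by
        ext z; simp [inner_zero_left]
      rw [this]; exact hint
    · obtain ⟨v, hsupp, y₀, hy₀, hstrict⟩ := supporting (convex_convexHull ℝ _) hp hint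
      set T : Finset E := amax S v with hTdef
      have hTne : T.Nonempty := amax_nonempty hS v
      have hface := argmax_hull S hS v
      have hpT : p ∈ convexHull ℝ (T : Set E) := by
        rw [← hface]; exact ⟨hp, fun y hy => hsupp y hy⟩
      -- values on T
      obtain ⟨s₁, hs₁T⟩ := id hTne
      set M : ℝ := ⟪v, s₁⟫ with hMdef
      have hTval : ∀ s ∈ T, ⟪v, s⟫ = M := by
        intro s hs
        obtain ⟨hsS, hsmax⟩ := mem_amax.1 hs
        obtain ⟨hs₁S, hs₁max⟩ := mem_amax.1 hs₁T
        exact le_antisymm (hs₁max s hsS) (hsmax s₁ hs₁S)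
      have hlt : ∀ s ∈ S, s ∉ T → ⟪v, s⟫ < M := by
        intro s hsS hsT
        rcases lt_or_eq_of_le ((mem_amax.1 hs₁T).2 s hsS) with h | h
        · exact h
        · exact absurd (mem_amax.2 ⟨hsS, fun t ht => by
            rw [h]; exact (mem_amax.1 hs₁T).2 t ht⟩) hsT
      -- T is a proper subset
      have hproper : T ≠ S := by
        intro h
        have hy₀' : y₀ ∈ {z ∈ convexHull ℝ (S : Set E) |
            ∀ y ∈ convexHull ℝ (S : Set E), ⟪v, y⟫ ≤ ⟪v, z⟫} := by
          rw [hface, ← hTdef, h]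
          exact hy₀
        exact absurd (hy₀'.2 p hp) (not_le.2 hstrict)
      have hTsubS : T ⊆ S := amax_subset
      have hcardlt : T.card < S.card :=
        Finset.card_lt_card (Finset.ssubset_iff_subset_ne.2 ⟨hTsubS, hproper⟩)
      have hcardT : T.card ≤ n := by omega
      obtain ⟨v'', hv''⟩ := ih T hcardT hTne p hpT
      -- max of v'' over T
      obtain ⟨s₂, hs₂am⟩ := amax_nonempty hTne v''
      set m : ℝ := ⟪v'', s₂⟫ with hmdef
      have hs₂T : s₂ ∈ T := amax_subset hs₂am
      have hm : ∀ t ∈ T, ⟪v'', t⟫ ≤ m := (mem_amax.1 hs₂am).2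
      -- choose ε
      have hev : ∀ᶠ ε in nhdsWithin (0:ℝ) (Set.Ioi 0),
          ∀ s ∈ (S : Set E), s ∉ T → ⟪v, s⟫ + ε * ⟪v'', s⟫ < M + ε * m := by
        rw [eventually_all_finite S.finite_toSet]
        intro s hsS
        by_cases hsT : s ∈ T
        · filter_upwards with ε h; exact absurd hsT h
        · have htend : Tendsto (fun ε : ℝ => ⟪v, s⟫ + ε * ⟪v'', s⟫ - (M + ε * m))
              (nhdsWithin (0:ℝ) (Set.Ioi 0)) (nhds (⟪v, s⟫ - M)) := by
            have hcont : Continuous fun ε : ℝ => ⟪v, s⟫ + ε * ⟪v'', s⟫ - (M + ε * m) := by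
              fun_prop
            have h2 := (hcont.continuousAt (x := (0:ℝ))).tendsto.mono_left
              (nhdsWithin_le_nhds (s := Set.Ioi (0:ℝ)))
            simpa using h2
          have hneg : ⟪v, s⟫ - M < 0 := sub_neg.2 (hlt s hsS hsT)
          filter_upwards [htend.eventually_lt_const hneg] with ε hε _
          linarith
      obtain ⟨ε, hεsmall, hεpos⟩ := (hev.and self_mem_nhdsWithin).exists
      have hεpos : (0:ℝ) < ε := hεpos
      have hinner : ∀ y : E, ⟪v + ε • v'', y⟫ = ⟪v, y⟫ + ε * ⟪v'', y⟫ := by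
        intro y; rw [inner_add_left, real_inner_smul_left]
      -- amax equality
      have hAA : amax S (v + ε • v'') = amax T v'' := by
        ext s
        constructor
        · intro hs
          obtain ⟨hsS, hsmax⟩ := mem_amax.1 hs
          have hfs₂ : ⟪v + ε • v'', s₂⟫ = M + ε * m := by
            rw [hinner, hTval s₂ hs₂T, hmdef]
          have hge : M + ε * m ≤ ⟪v + ε • v'', s⟫ := hfs₂ ▸ hsmax s₂ (amax_subset hs₂T)
          have hsT : s ∈ T := by
            by_contra hsT
            have := hεsmall s hsS hsT
            rw [hinner] at hge
            linarith
          refine mem_amax.2 ⟨hsT, fun t ht => ?_⟩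
          have h1 : ⟪v, s⟫ = M := hTval s hsT
          rw [hinner] at hge
          rw [h1] at hge
          have hms : m ≤ ⟪v'', s⟫ := by nlinarith [hεpos]
          exact le_trans (hm t ht) hms
        · intro hs
          obtain ⟨hsT, hsmax⟩ := mem_amax.1 hs
          have hseq : ⟪v'', s⟫ = m := le_antisymm (hm s hsT) (hsmax s₂ hs₂T)
          refine mem_amax.2 ⟨amax_subset hsT, fun t ht => ?_⟩
          rw [hinner, hinner, hTval s hsT, hseq]
          by_cases htT : t ∈ T
          · have := hm t htT
            have := hTval t htT
            nlinarith
          · have := hεsmall t ht htT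
            linarith
      refine ⟨v + ε • v'', ?_⟩
      rw [argmax_hull S hS (v + ε • v''), hAA, ← argmax_hull T hTne v'']
      exact hv''

lemma dist_min {Z F : Set E} {f n : E} (hn : n ∈ normalCone Z F) (hf : f ∈ F) :
    ∀ y ∈ Z, dist (f + n) f ≤ dist (f + n) y := by
  intro y hy
  have hinner : (0:ℝ) ≤ ⟪n, f - y⟫ := by
    have := hn f hf y hy
    rw [inner_sub_right]
    linarith
  have h1 : dist (f + n) f = ‖n‖ := by simp [dist_eq_norm]
  have h2 : dist (f + n) y = ‖n + (f - y)‖ := by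
    rw [dist_eq_norm]; congr 1; abel
  rw [h1, h2]
  have h3 := norm_add_sq_real n (f - y)
  nlinarith [norm_nonneg (n + (f - y)), norm_nonneg n, sq_nonneg ‖f - y‖]

lemma nearest_unique {Z : Set E} (hZconv : Convex ℝ Z) {x f₁ f₂ : E} (h₁Z : f₁ ∈ Z)
    (h₂Z : f₂ ∈ Z) (h₁ : ∀ y ∈ Z, dist x f₁ ≤ dist x y) (h₂ : ∀ y ∈ Z, dist x f₂ ≤ dist x y) :
    f₁ = f₂ := by
  have hne : Nonempty ↥Z := ⟨⟨f₁, h₁Z⟩⟩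
  have hbdd : BddBelow (Set.range fun w : Z => ‖x - w‖) := by
    refine ⟨0, ?_⟩; rintro r ⟨w, rfl⟩; positivity
  have heq : ∀ (f : E), f ∈ Z → (∀ y ∈ Z, dist x f ≤ dist x y) →
      ∀ w ∈ Z, ⟪x - f, w - f⟫ ≤ 0 := by
    intro f hfZ hmin
    refine (norm_eq_iInf_iff_real_inner_le_zero hZconv hfZ).1 ?_
    refine le_antisymm (le_ciInf fun w => ?_) (ciInf_le hbdd ⟨f, hfZ⟩)
    simpa [dist_eq_norm] using hmin w w.2
  have hA := heq f₁ h₁Z h₁ f₂ h₂Z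
  have hB := heq f₂ h₂Z h₂ f₁ h₁Z
  have hkey : ⟪f₂ - f₁, f₂ - f₁⟫ ≤ 0 := by
    have hsub : (x - f₁) - (x - f₂) = f₂ - f₁ := by abel
    have := inner_sub_left (𝕜 := ℝ) (x - f₁) (x - f₂) (f₂ - f₁)
    rw [hsub] at this
    have hB' : ⟪x - f₂, f₂ - f₁⟫ = -⟪x - f₂, f₁ - f₂⟫ := by
      rw [← inner_neg_right]; congr 1; abel
    rw [this, hB']
    linarith
  exact (sub_eq_zero.1 (real_inner_self_nonpos.1 hkey)).symm

lemma face_subset {Z F₁ F₂ : Set E} (h₁ : IsExposed ℝ Z F₁) (hne₁ : F₁.Nonempty) {f : E}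
    (hf₁ : f ∈ F₁) (hf₂ : f ∈ intrinsicInterior ℝ F₂) (hF₂Z : F₂ ⊆ Z) : F₂ ⊆ F₁ := by
  obtain ⟨l, hl⟩ := h₁ hne₁
  intro z hz
  obtain ⟨t, ht, hq⟩ := extend_relint hf₂ hz
  rw [hl] at hf₁
  obtain ⟨hfZ, hfmax⟩ := hf₁
  have hlq : l (f + t • (f - z)) ≤ l f := hfmax _ (hF₂Z hq)
  have hlz : l z ≤ l f := hfmax z (hF₂Z hz)
  have hexpand : l (f + t • (f - z)) = l f + t * (l f - l z) := by
    rw [map_add, map_smul, map_sub]; simp [smul_eq_mul]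
  have hzf : l z = l f := by
    rw [hexpand] at hlq
    nlinarith
  rw [hl]
  exact ⟨hF₂Z hz, fun y hy => hzf ▸ hfmax y hy⟩

end Helpers

/-- For a convex compact polytope `Z` in a Euclidean vector space `E`:
`E` is the disjoint union, over nonempty faces `F` of `Z`, of the sets
`relint(F) + N(F)`; and if `x = f + n` with `f ∈ relint F`, `n ∈ N(F)`,
then the closest-point projection of `x` onto `Z` is `f`.
Faces are the (exposed) faces of the polytope, including `Z` itself. -/
theorem stmt4 {E : Type*} [NormedAddCommGroup E] [InnerProductSpace ℝ E]
    [FiniteDimensional ℝ E]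
    (S : Finset E) (hS : S.Nonempty) (Z : Set E) (hZ : Z = convexHull ℝ (S : Set E)) :
    (∀ x : E, ∃! F : Set E, (IsExposed ℝ Z F ∧ F.Nonempty) ∧
        x ∈ intrinsicInterior ℝ F + normalCone Z F) ∧
    (∀ F : Set E, IsExposed ℝ Z F → F.Nonempty →
      ∀ f ∈ intrinsicInterior ℝ F, ∀ n ∈ normalCone Z F,
        f ∈ Z ∧ ∀ y ∈ Z, dist (f + n) f ≤ dist (f + n) y) := by
  subst hZ
  have hZconv : Convex ℝ (convexHull ℝ (S : Set E)) := convex_convexHull ℝ _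
  obtain ⟨s₀, hs₀⟩ := hS
  have hZne : (convexHull ℝ (S : Set E)).Nonempty := ⟨s₀, subset_convexHull ℝ _ hs₀⟩
  constructor
  · intro x
    -- closest point projection
    have hZcompact : IsCompact (convexHull ℝ (S : Set E)) := S.finite_toSet.isCompact_convexHull ℝ
    have hZcomplete : IsComplete (convexHull ℝ (S : Set E)) :=
      hZcompact.isClosed.isComplete
    obtain ⟨p, hpZ, hproj⟩ := exists_norm_eq_iInf_of_complete_convex hZne hZcomplete hZconv x
    have hchar := (norm_eq_iInf_iff_real_inner_le_zero hZconv hpZ).1 hproj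
    obtain ⟨v, hv⟩ := key S.card S le_rfl ⟨s₀, hs₀⟩ p hpZ
    set F : Set E := {z ∈ convexHull ℝ (S : Set E) |
      ∀ y ∈ convexHull ℝ (S : Set E), ⟪v, y⟫ ≤ ⟪v, z⟫} with hFdef
    have hexp : IsExposed ℝ (convexHull ℝ (S : Set E)) F := fun _ => ⟨innerSL ℝ v, rfl⟩
    have hpF : p ∈ F := intrinsicInterior_subset hv
    have hFne : F.Nonempty := ⟨p, hpF⟩
    have hFZ : F ⊆ convexHull ℝ (S : Set E) := fun z hz => hz.1
    have hnc : x - p ∈ normalCone (convexHull ℝ (S : Set E)) F := by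
      intro z hz y hy
      have h1 : ⟪x - p, y⟫ ≤ ⟪x - p, p⟫ := by
        have := hchar y hy
        rw [inner_sub_right] at this
        linarith
      have h2 : ⟪x - p, p⟫ ≤ ⟪x - p, z⟫ := by
        obtain ⟨t, ht, hq⟩ := extend_relint hv hz
        have hc := hchar _ (hFZ hq)
        have h3 : p + t • (p - z) - p = t • (p - z) := by abel
        rw [h3, real_inner_smul_right, inner_sub_right] at hc
        nlinarith
      exact le_trans h1 h2
    have hxmem : x ∈ intrinsicInterior ℝ F + normalCone (convexHull ℝ (S : Set E)) F := by
      have := Set.add_mem_add hv hnc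
      simpa using this
    refine ⟨F, ⟨⟨hexp, hFne⟩, hxmem⟩, ?_⟩
    rintro F' ⟨⟨hexp', hne'⟩, hmem'⟩
    obtain ⟨f', hf', n', hn', hsum⟩ := hmem'
    have hf'F' : f' ∈ F' := intrinsicInterior_subset hf'
    have hf'Z : f' ∈ convexHull ℝ (S : Set E) := hexp'.subset hf'F'
    have hmin' : ∀ y ∈ convexHull ℝ (S : Set E), dist x f' ≤ dist x y := by
      intro y hy
      have h := dist_min hn' hf'F' y hy
      have hsum' : f' + n' = x := hsum
      rwa [hsum'] at h
    have hminp : ∀ y ∈ convexHull ℝ (S : Set E), dist x p ≤ dist x y := by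
      intro y hy
      have := dist_min hnc hpF y hy
      have hx : p + (x - p) = x := by abel
      rwa [hx] at this
    have hfp : f' = p := nearest_unique hZconv hf'Z hpZ hmin' hminp
    apply Set.Subset.antisymm
    · exact face_subset hexp hFne hpF (hfp ▸ hf') hexp'.subset
    · exact face_subset hexp' hne' (hfp ▸ hf'F') hv hFZ
  · intro F hexp hne f hf n hn
    have hfF : f ∈ F := intrinsicInterior_subset hf
    exact ⟨hexp.subset hfF, fun y hy => dist_min hn hfF y hy⟩
end

section
/- Let σ be a convex polytope in a Euclidean vector space E and let D be a finite set of vectors that is sufficiently rich for σ (it contains w − v for any two distinct vertices v, w of σ). Then among the points of σ closest to the zonotope Z(D) there is a vertex of σ, and the set of points of σ farthest from Z(D) forms a face of σ. -/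
open scoped Pointwise

/-- The zonotope `Z(D) = Σ_{z ∈ D} [0,z]` (Minkowski sum of segments) of a finite set `D`. -/
noncomputable def zonotope {E : Type*} [NormedAddCommGroup E] [InnerProductSpace ℝ E]
    (D : Finset E) : Set E :=
  ∑ z ∈ D, segment ℝ (0 : E) z

open scoped RealInnerProductSpace
open Metric

section Aux

variable {E : Type*} [NormedAddCommGroup E] [InnerProductSpace ℝ E]

lemma mem_zonotope_iff (D : Finset E) (p : E) :
    p ∈ zonotope D ↔ ∃ t : E → ℝ,
      (∀ z ∈ D, 0 ≤ t z ∧ t z ≤ 1) ∧ ∑ z ∈ D, t z • z = p := by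
  classical
  rw [zonotope, Set.mem_finset_sum]
  constructor
  · rintro ⟨g, hg, hsum⟩
    have h : ∀ z ∈ D, ∃ c : ℝ, (0 ≤ c ∧ c ≤ 1) ∧ c • z = g z := by
      intro z hz
      have hgz : g z ∈ segment ℝ (0 : E) z := hg hz
      rw [segment_eq_image] at hgz
      obtain ⟨θ, hθ, hh⟩ := hgz
      exact ⟨θ, ⟨hθ.1, hθ.2⟩, by simpa using hh⟩
    choose! t ht htz using h
    refine ⟨t, ht, ?_⟩
    rw [← hsum]
    exact Finset.sum_congr rfl fun z hz => htz z hz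
  · rintro ⟨t, ht, hsum⟩
    refine ⟨fun z => t z • z, fun {z} hz => ?_, hsum⟩
    rw [segment_eq_image]
    exact ⟨t z, ⟨(ht z hz).1, (ht z hz).2⟩, by simp⟩

lemma zonotope_convex (D : Finset E) : Convex ℝ (zonotope D) := by
  rw [zonotope]
  refine Finset.sum_induction _ (fun s => Convex ℝ s) (fun a b ha hb => ha.add hb) ?_
    (fun z _ => convex_segment _ _)
  rw [show (0 : Set E) = {0} from rfl]
  exact convex_singleton 0

lemma zonotope_isCompact (D : Finset E) : IsCompact (zonotope D) := by
  rw [zonotope]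
  refine Finset.sum_induction _ (fun s => IsCompact s) (fun a b ha hb => ha.add hb) ?_ ?_
  · rw [show (0 : Set E) = {0} from rfl]; exact isCompact_singleton
  · intro z _
    rw [segment_eq_image]
    exact isCompact_Icc.image <| by fun_prop

lemma zero_mem_zonotope (D : Finset E) : (0 : E) ∈ zonotope D := by
  rw [mem_zonotope_iff]
  exact ⟨fun _ => 0, fun z _ => ⟨le_refl _, zero_le_one⟩, by simp⟩

lemma var_ineq {Z : Set E} (hZ : Convex ℝ Z) {x p : E} (hp : p ∈ Z)
    (hmin : ∀ z ∈ Z, ‖x - p‖ ≤ ‖x - z‖) : ∀ z ∈ Z, ⟪x - p, z - p⟫ ≤ 0 := by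
  intro z hz
  by_contra hc
  push_neg at hc
  set c : ℝ := ⟪x - p, z - p⟫ with hcdef
  have hzp : z - p ≠ 0 := by
    intro h0
    rw [hcdef, h0, inner_zero_right] at hc
    exact lt_irrefl 0 hc
  have hn : (0:ℝ) < ‖z - p‖ ^ 2 := by have := norm_pos_iff.mpr hzp; positivity
  set θ : ℝ := min 1 (c / ‖z - p‖ ^ 2) with hθdef
  have hθpos : 0 < θ := lt_min one_pos (div_pos hc hn)
  have hθ1 : θ ≤ 1 := min_le_left _ _
  have hθc : θ * ‖z - p‖ ^ 2 ≤ c := by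
    calc θ * ‖z - p‖ ^ 2 ≤ (c / ‖z - p‖ ^ 2) * ‖z - p‖ ^ 2 := by
          have := min_le_right 1 (c / ‖z - p‖ ^ 2)
          nlinarith
      _ = c := by field_simp
  have hmem : p + θ • (z - p) ∈ Z := by
    have h := hZ hp hz (by linarith : (0:ℝ) ≤ 1 - θ) hθpos.le (by ring)
    have : (1 - θ) • p + θ • z = p + θ • (z - p) := by
      rw [smul_sub, sub_smul, one_smul]; abel
    rwa [this] at h
  have hle := hmin _ hmem
  have hexp : ‖x - (p + θ • (z - p))‖ ^ 2
      = ‖x - p‖ ^ 2 - 2 * θ * c + θ ^ 2 * ‖z - p‖ ^ 2 := by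
    have h1 : x - (p + θ • (z - p)) = (x - p) - θ • (z - p) := by abel
    rw [h1, norm_sub_sq_real, real_inner_smul_right, norm_smul]
    simp [mul_pow, abs_of_nonneg hθpos.le, hcdef]
    ring
  have hsq : ‖x - p‖ ^ 2 ≤ ‖x - (p + θ • (z - p))‖ ^ 2 := by
    have h0 : (0:ℝ) ≤ ‖x - p‖ := norm_nonneg _
    nlinarith [hle]
  nlinarith [hsq, hexp, hθpos, hθc, hθ1, hn]

lemma supp_bound {Z : Set E} (hZc : IsCompact Z) (hZne : Z.Nonempty) {p u : E} (hp : p ∈ Z)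
    (hvar : ∀ z ∈ Z, ⟪u, z - p⟫ ≤ 0) (w : E) :
    ⟪u, w - p⟫ ≤ ‖u‖ * infDist w Z := by
  obtain ⟨q, hq, hdq⟩ := hZc.exists_infDist_eq_dist hZne w
  have hsplit : w - p = (w - q) + (q - p) := by abel
  calc ⟪u, w - p⟫ = ⟪u, w - q⟫ + ⟪u, q - p⟫ := by rw [hsplit, inner_add_right]
    _ ≤ ⟪u, w - q⟫ := by linarith [hvar q hq]
    _ ≤ ‖u‖ * ‖w - q‖ := real_inner_le_norm u (w - q)
    _ = ‖u‖ * infDist w Z := by rw [hdq, dist_eq_norm]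

end Aux

section Aux2

variable {E : Type*} [NormedAddCommGroup E] [InnerProductSpace ℝ E]

lemma sum_smul_fiber {ι : Type*} [DecidableEq E] (s : Finset ι) (D : Finset E) (e : ι → E)
    (he : ∀ i ∈ s, e i ∈ D) (c : ι → ℝ) :
    ∑ z ∈ D, (∑ i ∈ s.filter (fun i => e i = z), c i) • z = ∑ i ∈ s, c i • e i := by
  rw [← Finset.sum_fiberwise_of_maps_to he (fun i => c i • e i)]
  refine Finset.sum_congr rfl fun z _ => ?_
  rw [Finset.sum_smul]
  exact Finset.sum_congr rfl fun i hi => by rw [(Finset.mem_filter.1 hi).2]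

lemma coeff_zero_of_inner_neg {D : Finset E} {p u : E}
    (hvar : ∀ z' ∈ zonotope D, ⟪u, z' - p⟫ ≤ 0)
    {t : E → ℝ} (ht : ∀ z ∈ D, 0 ≤ t z ∧ t z ≤ 1) (hsum : ∑ z ∈ D, t z • z = p)
    {z : E} (hz : z ∈ D) (hneg : ⟪u, z⟫ < 0) : t z = 0 := by
  classical
  by_contra htz
  have h0z : 0 < t z := lt_of_le_of_ne (ht z hz).1 (Ne.symm htz)
  have hmem : p - t z • z ∈ zonotope D := by
    rw [mem_zonotope_iff]
    refine ⟨fun y => if y = z then 0 else t y, ?_, ?_⟩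
    · intro y hy
      by_cases h : y = z
      · simp [h]
      · simp only [h, if_false]; exact ht y hy
    · have hterm : ∀ y ∈ D, (if y = z then (0:ℝ) else t y) • y
          = t y • y - (if y = z then t z • z else 0) := by
        intro y _
        by_cases h : y = z
        · subst h; simp
        · simp [h]
      rw [Finset.sum_congr rfl hterm, Finset.sum_sub_distrib, hsum,
        Finset.sum_ite_eq' D z (fun _ => t z • z), if_pos hz]
  have h := hvar _ hmem
  have : p - t z • z - p = -(t z • z) := by abel
  rw [this, inner_neg_right, real_inner_smul_right] at h
  nlinarith

lemma step_mem (D : Finset E) {p u : E} (hp : p ∈ zonotope D)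
    (hvar : ∀ z ∈ zonotope D, ⟪u, z - p⟫ ≤ 0)
    (S : Finset E) (lam : E → ℝ) (h0 : ∀ i ∈ S, 0 ≤ lam i) (h1 : ∀ i ∈ S, lam i ≤ 1)
    (w : E) (hd : ∀ i ∈ S, w - i ∈ D) (hneg : ∀ i ∈ S, ⟪u, w - i⟫ < 0) :
    p + ∑ i ∈ S, lam i • (w - i) ∈ zonotope D := by
  classical
  obtain ⟨t, ht, hsum⟩ := (mem_zonotope_iff D p).1 hp
  rw [mem_zonotope_iff]
  refine ⟨fun z => t z + ∑ i ∈ S.filter (fun i => w - i = z), lam i, ?_, ?_⟩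
  · intro z hz
    dsimp only
    by_cases hA : (S.filter (fun i => w - i = z)).Nonempty
    · obtain ⟨i0, hi0⟩ := hA
      rw [Finset.mem_filter] at hi0
      have hfeq : S.filter (fun i => w - i = z) = {i0} := by
        apply Finset.eq_singleton_iff_unique_mem.2
        refine ⟨Finset.mem_filter.2 hi0, fun j hj => ?_⟩
        rw [Finset.mem_filter] at hj
        have : w - j = w - i0 := by rw [hj.2, hi0.2]
        exact sub_right_inj.1 this
      have htz0 : t z = 0 := by
        refine coeff_zero_of_inner_neg hvar ht hsum hz ?_
        rw [← hi0.2]; exact hneg i0 hi0.1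
      rw [hfeq, Finset.sum_singleton, htz0, zero_add]
      exact ⟨h0 i0 hi0.1, h1 i0 hi0.1⟩
    · rw [Finset.not_nonempty_iff_eq_empty] at hA
      rw [hA, Finset.sum_empty, add_zero]
      exact ht z hz
  · simp_rw [add_smul, Finset.sum_add_distrib, hsum]
    rw [sum_smul_fiber S D (fun i => w - i) hd lam]

end Aux2

section Aux3

variable {E : Type*} [NormedAddCommGroup E] [InnerProductSpace ℝ E]

lemma lemmaA (V D : Finset E)
    (hrich : ∀ v ∈ V, ∀ w ∈ V, v ≠ w → w - v ∈ D)
    (hext : ∀ j ∈ V, ∀ i ∈ V, ∀ i' ∈ V, i ≠ j → i' ≠ j → j - i ≠ i' - j)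
    (lam : E → ℝ) (h0 : ∀ i ∈ V, 0 ≤ lam i) (hsum1 : ∑ i ∈ V, lam i = 1)
    {p : E} (hp : p ∈ zonotope D) :
    ∃ j ∈ V, p + (j - ∑ i ∈ V, lam i • i) ∈ zonotope D := by
  classical
  set S : Finset E := V.filter (fun i => 0 < lam i) with hSdef
  have hSV : S ⊆ V := Finset.filter_subset _ _
  have hSne : S.Nonempty := by
    rw [hSdef, Finset.filter_nonempty_iff]
    by_contra h
    push_neg at h
    have hzero : ∑ i ∈ V, lam i = 0 :=
      Finset.sum_eq_zero (fun i hi => le_antisymm (h i hi) (h0 i hi))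
    rw [hzero] at hsum1
    exact zero_ne_one hsum1
  have h1 : ∀ i ∈ V, lam i ≤ 1 := fun i hi =>
    hsum1 ▸ Finset.single_le_sum (fun j hj => h0 j hj) hi
  -- compact set of representations of p
  set P : Set (E → ℝ) := Set.pi Set.univ (fun z => if z ∈ D then Set.Icc (0:ℝ) 1 else {0})
    with hPdef
  have hPcomp : IsCompact P := isCompact_univ_pi (fun z => by
    by_cases h : z ∈ D
    · simp only [h, if_true]; exact isCompact_Icc
    · simp only [h, if_false]; exact isCompact_singleton)
  have hcont : Continuous (fun t : E → ℝ => ∑ z ∈ D, t z • z) :=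
    continuous_finset_sum _ (fun z _ => (continuous_apply z).smul continuous_const)
  set K : Set (E → ℝ) := P ∩ {t | ∑ z ∈ D, t z • z = p} with hKdef
  have hKcomp : IsCompact K := hPcomp.inter_right (isClosed_eq hcont continuous_const)
  have hKne : K.Nonempty := by
    obtain ⟨t₀, ht₀, hs₀⟩ := (mem_zonotope_iff D p).1 hp
    refine ⟨fun z => if z ∈ D then t₀ z else 0, ⟨?_, ?_⟩⟩
    · intro z _
      by_cases hz : z ∈ D
      · simp only [hz, if_true]
        exact Set.mem_Icc.2 ⟨(ht₀ z hz).1, (ht₀ z hz).2⟩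
      · simp [hz]
    · simp only [Set.mem_setOf_eq]
      rw [← hs₀]
      exact Finset.sum_congr rfl fun z hz => by simp [hz]
  obtain ⟨t, htK, hmin⟩ := hKcomp.exists_isMinOn hKne
    (continuous_finset_sum D (fun z _ => continuous_apply z)).continuousOn
  have ht01 : ∀ z ∈ D, 0 ≤ t z ∧ t z ≤ 1 := by
    intro z hz
    have h := htK.1 z (Set.mem_univ z)
    dsimp only at h
    rw [if_pos hz] at h
    exact ⟨h.1, h.2⟩
  have htsum : ∑ z ∈ D, t z • z = p := htK.2
  -- combinatorial core : a good vertex exists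
  have key : ∃ j ∈ S, ∀ i ∈ S, i ≠ j → lam i ≤ 1 - t (j - i) + t (i - j) := by
    by_contra hbad
    push_neg at hbad
    have hch : ∀ j, ∃ i, j ∈ S → (i ∈ S ∧ i ≠ j ∧ 1 - t (j - i) + t (i - j) < lam i) := by
      intro j
      by_cases hj : j ∈ S
      · obtain ⟨i, hiS, hine, hlt⟩ := hbad j hj
        exact ⟨i, fun _ => ⟨hiS, hine, hlt⟩⟩
      · exact ⟨j, fun h => absurd h hj⟩
    choose f hf using hch
    obtain ⟨j₀, hj₀⟩ := hSne
    set c : ℕ → E := fun n => f^[n] j₀ with hcdef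
    have hcS : ∀ n, c n ∈ S := by
      intro n
      induction n with
      | zero => simpa [hcdef] using hj₀
      | succ n ih =>
        have hcsucc : c (n+1) = f (c n) := by
          rw [hcdef]; simp [Function.iterate_succ_apply']
        rw [hcsucc]
        exact (hf (c n) ih).1
    have hstep : ∀ n, f (c n) ≠ c n ∧
        1 - t (c n - f (c n)) + t (f (c n) - c n) < lam (f (c n)) := by
      intro n
      obtain ⟨hh1, hh2, hh3⟩ := hf (c n) (hcS n)
      exact ⟨hh2, hh3⟩
    have hmain : ∀ a b : ℕ, a < b → c a = c b → False := by
      intro a b hlt hcab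
      set k := b - a with hk
      have hk0 : 0 < k := by omega
      have hcyc : f^[k] (c a) = c a := by
        rw [hcdef, ← Function.iterate_add_apply]
        have hkk : k + a = b := by omega
        rw [hkk]
        exact hcab.symm
      set d : ℕ → E := fun m => f^[m] (c a) with hddef
      have hdc : ∀ m, d m = c (m + a) := by
        intro m; rw [hddef, hcdef]; simp [Function.iterate_add_apply]
      have hdS : ∀ m, d m ∈ S := fun m => by rw [hdc]; exact hcS _
      have hdsucc : ∀ m, d (m + 1) = f (d m) := by
        intro m; rw [hddef]; simp [Function.iterate_succ_apply']
      set e : ℕ → E := fun m => d m - d (m + 1) with hedef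
      have hestep : ∀ m, 0 < t (e m) ∧ e m ∈ D := by
        intro m
        have h2 := (hstep (m + a)).2
        have h1' := (hstep (m + a)).1
        rw [← hdc m, ← hdsucc m] at h2 h1'
        have hne : d (m + 1) ≠ d m := h1'
        have heD : e m ∈ D :=
          hrich (d (m+1)) (hSV (hdS (m+1))) (d m) (hSV (hdS m)) hne
        have hneD : d (m+1) - d m ∈ D :=
          hrich (d m) (hSV (hdS m)) (d (m+1)) (hSV (hdS (m+1))) hne.symm
        have hl1 : lam (d (m+1)) ≤ 1 := h1 _ (hSV (hdS (m+1)))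
        have ht0' : 0 ≤ t (d (m+1) - d m) := (ht01 _ hneD).1
        refine ⟨?_, heD⟩
        rw [hedef]
        dsimp only
        linarith
      have hesum : ∑ m ∈ Finset.range k, e m = 0 := by
        have : ∀ m, e m = d m - d (m+1) := fun m => rfl
        rw [Finset.sum_congr rfl (fun m _ => this m), Finset.sum_range_sub' d]
        have hd0 : d 0 = c a := rfl
        have hdk : d k = c a := hcyc
        rw [hd0, hdk, sub_self]
      set ν : E → ℕ := fun z => ((Finset.range k).filter (fun m => e m = z)).card with hνdef
      set img := (Finset.range k).image e with himgdef
      have himgne : img.Nonempty := by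
        rw [himgdef]
        exact Finset.Nonempty.image (by rwa [Finset.nonempty_range_iff, ← Nat.pos_iff_ne_zero]) e
      set ε : ℝ := (img.inf' himgne t) / k with hεdef
      have hεpos : 0 < ε := by
        apply div_pos ?_ (by exact_mod_cast hk0)
        rw [Finset.lt_inf'_iff]
        intro z hz
        rw [himgdef] at hz
        obtain ⟨m, _, rfl⟩ := Finset.mem_image.1 hz
        exact (hestep m).1
      have hνk : ∀ z, ν z ≤ k := fun z =>
        le_trans (Finset.card_filter_le _ _) (by simp)
      have hν0 : ∀ z, z ∉ D → ν z = 0 := by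
        intro z hz
        rw [hνdef]
        dsimp only
        rw [Finset.card_eq_zero, Finset.filter_eq_empty_iff]
        intro m _ heq
        exact hz (heq ▸ (hestep m).2)
      have hεν : ∀ z, 0 < ν z → ε * ν z ≤ t z := by
        intro z hν
        have hfil : ((Finset.range k).filter (fun m => e m = z)).Nonempty := by
          rw [← Finset.card_pos]; exact hν
        obtain ⟨m, hm⟩ := hfil
        rw [Finset.mem_filter] at hm
        have hzimg : z ∈ img := by
          rw [himgdef, ← hm.2]
          exact Finset.mem_image_of_mem e hm.1
        calc ε * ν z ≤ ε * k := by
              have : (ν z : ℝ) ≤ (k : ℝ) := by exact_mod_cast hνk z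
              nlinarith
          _ = img.inf' himgne t := by
              rw [hεdef]
              field_simp
          _ ≤ t z := Finset.inf'_le t hzimg
      set t' : E → ℝ := fun z => t z - ε * ν z with ht'def
      have hν_smulsum : ∑ z ∈ D, (ν z : ℝ) • z = ∑ m ∈ Finset.range k, e m := by
        have := sum_smul_fiber (Finset.range k) D e (fun m _ => (hestep m).2) (fun _ => (1:ℝ))
        simp only [one_smul] at this
        rw [← this]
        refine Finset.sum_congr rfl fun z _ => ?_
        congr 1
        rw [hνdef]
        simp [Finset.sum_const]
      have hνcount : ∑ z ∈ D, (ν z : ℝ) = k := by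
        have h2 := Finset.sum_fiberwise_of_maps_to (s := Finset.range k) (t := D) (g := e)
          (fun m _ => (hestep m).2) (fun _ => (1:ℝ))
        have h3 : ∑ z ∈ D, (ν z : ℝ)
            = ∑ z ∈ D, ∑ m ∈ (Finset.range k).filter (fun m => e m = z), (1:ℝ) := by
          refine Finset.sum_congr rfl fun z _ => ?_
          rw [Finset.sum_const, hνdef]
          simp
        rw [h3, h2]
        simp
      have ht'K : t' ∈ K := by
        constructor
        · intro z _
          show t' z ∈ (fun z => if z ∈ D then Set.Icc (0:ℝ) 1 else {0}) z
          dsimp only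
          by_cases hz : z ∈ D
          · rw [if_pos hz]
            refine Set.mem_Icc.2 ⟨?_, ?_⟩
            · by_cases hν : 0 < ν z
              · have := hεν z hν
                rw [ht'def]; dsimp only; linarith
              · have hνz : ν z = 0 := by omega
                rw [ht'def]; dsimp only; rw [hνz]
                simpa using (ht01 z hz).1
            · have hnn : 0 ≤ ε * ν z := by positivity
              have := (ht01 z hz).2
              rw [ht'def]; dsimp only; linarith
          · rw [if_neg hz]
            have hzero : t z = 0 := by
              have h := htK.1 z (Set.mem_univ z)
              dsimp only at h
              rwa [if_neg hz, Set.mem_singleton_iff] at h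
            rw [ht'def]
            simp [hzero, hν0 z hz]
        · show ∑ z ∈ D, t' z • z = p
          have hterm : ∀ z ∈ D, t' z • z = t z • z - ε • ((ν z : ℝ) • z) := by
            intro z _
            rw [ht'def]; dsimp only
            rw [sub_smul, smul_smul]
          rw [Finset.sum_congr rfl hterm, Finset.sum_sub_distrib, htsum, ← Finset.smul_sum,
            hν_smulsum, hesum, smul_zero, sub_zero]
      have hlt' : ∑ z ∈ D, t' z < ∑ z ∈ D, t z := by
        have heq : ∑ z ∈ D, t' z = ∑ z ∈ D, t z - ε * k := by
          rw [ht'def]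
          dsimp only
          rw [Finset.sum_sub_distrib, ← Finset.mul_sum, hνcount]
        rw [heq]
        have : (0:ℝ) < ε * k := by
          have : (0:ℝ) < (k:ℝ) := by exact_mod_cast hk0
          positivity
        linarith
      exact absurd (isMinOn_iff.1 hmin t' ht'K) (not_le.2 hlt')
    obtain ⟨a, _, b, _, hab, hcab⟩ := Finset.exists_ne_map_eq_of_card_lt_of_maps_to
      (show S.card < (Finset.range (S.card + 1)).card by simp) (fun n _ => hcS n)
    rcases lt_or_gt_of_ne hab with h | h
    · exact hmain a b h hcab
    · exact hmain b a h hcab.symm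
  -- use the good vertex to construct the move
  obtain ⟨j, hjS, hgood⟩ := key
  have hjV : j ∈ V := hSV hjS
  refine ⟨j, hjV, ?_⟩
  set S' : Finset E := S.erase j with hS'def
  set A : E → ℝ := fun i => min (lam i) (1 - t (j - i)) with hAdef
  set B : E → ℝ := fun i => lam i - A i with hBdef
  have hS'V : ∀ i ∈ S', i ∈ V := fun i hi => hSV (Finset.mem_of_mem_erase hi)
  have hS'ne : ∀ i ∈ S', i ≠ j := fun i hi => Finset.ne_of_mem_erase hi
  have hjiD : ∀ i ∈ S', j - i ∈ D := fun i hi =>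
    hrich i (hS'V i hi) j hjV (hS'ne i hi)
  have hijD : ∀ i ∈ S', i - j ∈ D := fun i hi =>
    hrich j hjV i (hS'V i hi) (Ne.symm (hS'ne i hi))
  have hprops : ∀ i ∈ S', 0 ≤ A i ∧ A i ≤ 1 - t (j - i) ∧ 0 ≤ B i ∧ B i ≤ t (i - j)
      ∧ A i + B i = lam i := by
    intro i hi
    have hl0 : 0 ≤ lam i := h0 i (hS'V i hi)
    have ht1 : t (j - i) ≤ 1 := (ht01 _ (hjiD i hi)).2
    have htij0 : 0 ≤ t (i - j) := (ht01 _ (hijD i hi)).1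
    have hgood' : lam i ≤ 1 - t (j - i) + t (i - j) :=
      hgood i (Finset.mem_of_mem_erase hi) (hS'ne i hi)
    have hA0 : 0 ≤ A i := le_min hl0 (by linarith)
    have hA1 : A i ≤ 1 - t (j - i) := min_le_right _ _
    have hAlam : A i ≤ lam i := min_le_left _ _
    refine ⟨hA0, hA1, by rw [hBdef]; dsimp only; linarith, ?_, by rw [hBdef]; ring⟩
    rw [hBdef]; dsimp only
    rcases min_choice (lam i) (1 - t (j - i)) with hmc | hmc
    · rw [hAdef]; dsimp only; rw [hmc]; simpa using htij0
    · rw [hAdef]; dsimp only; rw [hmc]; linarith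
  set t'' : E → ℝ := fun z => t z + (∑ i ∈ S'.filter (fun i => j - i = z), A i)
      - (∑ i ∈ S'.filter (fun i => i - j = z), B i) with ht''def
  have htarget : ∑ i ∈ S', lam i • (j - i) = j - ∑ i ∈ V, lam i • i := by
    have hstep1 : ∑ i ∈ S', lam i • (j - i) = ∑ i ∈ S, lam i • (j - i) := by
      rw [hS'def]
      exact Finset.sum_erase _ (by simp)
    have hstep2 : ∑ i ∈ S, lam i • (j - i) = ∑ i ∈ V, lam i • (j - i) := by
      rw [hSdef]
      refine Finset.sum_filter_of_ne ?_
      intro i _ hne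
      by_contra hnot
      push_neg at hnot
      have : lam i = 0 := le_antisymm hnot (h0 i ‹i ∈ V›)
      rw [this, zero_smul] at hne
      exact hne rfl
    rw [hstep1, hstep2]
    have : ∀ i ∈ V, lam i • (j - i) = lam i • j - lam i • i := fun i _ => smul_sub _ _ _
    rw [Finset.sum_congr rfl this, Finset.sum_sub_distrib, ← Finset.sum_smul, hsum1, one_smul]
  have hmem : p + (j - ∑ i ∈ V, lam i • i) ∈ zonotope D := by
    rw [mem_zonotope_iff]
    refine ⟨t'', ?_, ?_⟩
    · intro z hz
      rw [ht''def]; dsimp only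
      by_cases hA1 : (S'.filter (fun i => j - i = z)).Nonempty
      · obtain ⟨i0, hi0⟩ := hA1
        rw [Finset.mem_filter] at hi0
        have hfeqA : S'.filter (fun i => j - i = z) = {i0} := by
          apply Finset.eq_singleton_iff_unique_mem.2
          refine ⟨Finset.mem_filter.2 hi0, fun i' hi' => ?_⟩
          rw [Finset.mem_filter] at hi'
          have : j - i' = j - i0 := by rw [hi'.2, hi0.2]
          exact sub_right_inj.1 this
        have hfeqB : S'.filter (fun i => i - j = z) = ∅ := by
          rw [Finset.filter_eq_empty_iff]
          intro i' hi' heq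
          exact hext j hjV i0 (hS'V i0 hi0.1) i' (hS'V i' hi')
            (hS'ne i0 hi0.1) (hS'ne i' hi') (by rw [hi0.2, heq])
        rw [hfeqA, hfeqB, Finset.sum_singleton, Finset.sum_empty]
        obtain ⟨hA0, hA1', _, _, _⟩ := hprops i0 hi0.1
        have htz := ht01 z hz
        constructor
        · linarith [htz.1]
        · rw [← hi0.2] at htz ⊢
          linarith
      · rw [Finset.not_nonempty_iff_eq_empty] at hA1
        rw [hA1, Finset.sum_empty]
        by_cases hB1 : (S'.filter (fun i => i - j = z)).Nonempty
        · obtain ⟨i0, hi0⟩ := hB1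
          rw [Finset.mem_filter] at hi0
          have hfeqB : S'.filter (fun i => i - j = z) = {i0} := by
            apply Finset.eq_singleton_iff_unique_mem.2
            refine ⟨Finset.mem_filter.2 hi0, fun i' hi' => ?_⟩
            rw [Finset.mem_filter] at hi'
            have : i' - j = i0 - j := by rw [hi'.2, hi0.2]
            exact sub_left_inj.1 this
          rw [hfeqB, Finset.sum_singleton]
          obtain ⟨_, _, hB0, hB1', _⟩ := hprops i0 hi0.1
          have htz := ht01 z hz
          constructor
          · rw [← hi0.2] at htz ⊢
            linarith
          · linarith [htz.2]
        · rw [Finset.not_nonempty_iff_eq_empty] at hB1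
          rw [hB1, Finset.sum_empty]
          have htz := ht01 z hz
          constructor <;> [skip; skip] <;> · simp; linarith [htz.1, htz.2]
    · have hterm : ∀ z ∈ D, t'' z • z = t z • z
          + (∑ i ∈ S'.filter (fun i => j - i = z), A i) • z
          - (∑ i ∈ S'.filter (fun i => i - j = z), B i) • z := by
        intro z _
        rw [ht''def]; dsimp only
        rw [sub_smul, add_smul]
      rw [Finset.sum_congr rfl hterm, Finset.sum_sub_distrib, Finset.sum_add_distrib, htsum,
        sum_smul_fiber S' D (fun i => j - i) hjiD A,
        sum_smul_fiber S' D (fun i => i - j) hijD B]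
      have hBneg : ∑ i ∈ S', B i • (i - j) = - ∑ i ∈ S', B i • (j - i) := by
        rw [← Finset.sum_neg_distrib]
        refine Finset.sum_congr rfl fun i _ => ?_
        rw [← smul_neg, neg_sub]
      rw [hBneg, sub_neg_eq_add, add_assoc, ← Finset.sum_add_distrib]
      have : ∀ i ∈ S', A i • (j - i) + B i • (j - i) = lam i • (j - i) := by
        intro i hi
        rw [← add_smul, (hprops i hi).2.2.2.2]
      rw [Finset.sum_congr rfl this, htarget]
  exact hmem

end Aux3

/-- If `D` is sufficiently rich for a polytope `σ` (with vertex set `V`), then among the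
points of `σ` closest to the zonotope `Z(D)` there is a vertex, and the set of points of `σ`
farthest from `Z(D)` forms a face of `σ` (an exposed face; `IsExposed` includes `σ` itself,
via the zero functional). -/
theorem stmt6 {E : Type*} [NormedAddCommGroup E] [InnerProductSpace ℝ E]
    [FiniteDimensional ℝ E]
    (V D : Finset E) (hVne : V.Nonempty) (σ : Set E)
    (hσ : σ = convexHull ℝ (V : Set E))
    (hV : (V : Set E) = Set.extremePoints ℝ σ)
    (hrich : ∀ v ∈ V, ∀ w ∈ V, v ≠ w → w - v ∈ D) :
    (∃ v ∈ V, ∀ x ∈ σ, Metric.infDist v (zonotope D) ≤ Metric.infDist x (zonotope D)) ∧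
    IsExposed ℝ σ
      {x ∈ σ | ∀ y ∈ σ, Metric.infDist y (zonotope D) ≤ Metric.infDist x (zonotope D)} := by

  classical
  have hZconv : Convex ℝ (zonotope D) := zonotope_convex D
  have hZcomp : IsCompact (zonotope D) := zonotope_isCompact D
  have hZne : (zonotope D).Nonempty := ⟨0, zero_mem_zonotope D⟩
  have hVσ : (V : Set E) ⊆ σ := by rw [hσ]; exact subset_convexHull ℝ _
  have hσcomp : IsCompact σ := by rw [hσ]; exact V.finite_toSet.isCompact_convexHull ℝ
  have hσne : σ.Nonempty := ⟨hVne.choose, hVσ (Finset.mem_coe.2 hVne.choose_spec)⟩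
  have hext : ∀ j ∈ V, ∀ i ∈ V, ∀ i' ∈ V, i ≠ j → i' ≠ j → j - i ≠ i' - j := by
    intro j hj i hi i' hi' hij hi'j heq
    have hjext : j ∈ Set.extremePoints ℝ σ := by rw [← hV]; exact Finset.mem_coe.2 hj
    by_cases hii' : i = i'
    · subst hii'
      have hsum2 : j + j = i + i := sub_eq_sub_iff_add_eq_add.1 heq
      have h2 : (2:ℝ) • j = (2:ℝ) • i := by
        rw [two_smul, two_smul]
        exact_mod_cast hsum2
      exact hij (smul_right_injective E (two_ne_zero : (2:ℝ) ≠ 0) h2).symm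
    · have hsum2 : j + j = i' + i := sub_eq_sub_iff_add_eq_add.1 heq
      have hmid : j ∈ openSegment ℝ i i' := by
        rw [openSegment_eq_image]
        refine ⟨1/2, ?_, ?_⟩
        · constructor <;> norm_num
        · have h2 : (2:ℝ) • j = i + i' := by
            rw [two_smul, hsum2]
            exact add_comm i' i
          have h2j : j = ((1:ℝ)/2) • (i + i') := by
            calc j = ((1:ℝ)/2) • ((2:ℝ) • j) := by rw [smul_smul]; norm_num
              _ = ((1:ℝ)/2) • (i + i') := by rw [h2]
          rw [h2j, smul_add]
          norm_num
      obtain hi_eq := hjext.2 (hVσ (Finset.mem_coe.2 hi))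
        (hVσ (Finset.mem_coe.2 hi')) hmid
      exact hij hi_eq
  have hrep : ∀ x ∈ σ, ∃ lam : E → ℝ, (∀ i ∈ V, 0 ≤ lam i) ∧ ∑ i ∈ V, lam i = 1
      ∧ ∑ i ∈ V, lam i • i = x := by
    intro x hx
    rw [hσ, Finset.convexHull_eq] at hx
    obtain ⟨w, hw0, hw1, hwx⟩ := hx
    refine ⟨w, hw0, hw1, ?_⟩
    rw [← hwx, Finset.centerMass_eq_of_sum_1 _ _ hw1]
    rfl
  constructor
  · -- closest point can be taken to be a vertex
    obtain ⟨x₀, hx₀σ, hx₀min⟩ := hσcomp.exists_isMinOn hσne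
      (Metric.continuous_infDist_pt (zonotope D)).continuousOn
    obtain ⟨p, hpZ, hpd⟩ := hZcomp.exists_infDist_eq_dist hZne x₀
    obtain ⟨lam, hlam0, hlam1, hlamx⟩ := hrep x₀ hx₀σ
    obtain ⟨j, hjV, hmem⟩ := lemmaA V D hrich hext lam hlam0 hlam1 hpZ
    rw [hlamx] at hmem
    refine ⟨j, hjV, fun x hx => ?_⟩
    calc Metric.infDist j (zonotope D) ≤ dist j (p + (j - x₀)) :=
          Metric.infDist_le_dist_of_mem hmem
      _ = dist x₀ p := by rw [dist_eq_norm, dist_eq_norm]; congr 1; abel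
      _ = Metric.infDist x₀ (zonotope D) := hpd.symm
      _ ≤ Metric.infDist x (zonotope D) := isMinOn_iff.1 hx₀min x hx
  · -- farthest set is exposed
    intro _
    obtain ⟨xs, hxsσ, hxsmax⟩ := hσcomp.exists_isMaxOn hσne
      (Metric.continuous_infDist_pt (zonotope D)).continuousOn
    have hmaxσ : ∀ y ∈ σ, Metric.infDist y (zonotope D) ≤ Metric.infDist xs (zonotope D) :=
      fun y hy => isMaxOn_iff.1 hxsmax y hy
    set M := Metric.infDist xs (zonotope D) with hMdef
    by_cases hM : M ≤ 0
    · refine ⟨0, ?_⟩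
      have hall : ∀ y ∈ σ, Metric.infDist y (zonotope D) = 0 := fun y hy =>
        le_antisymm (le_trans (hmaxσ y hy) hM) Metric.infDist_nonneg
      ext x
      simp only [Set.mem_setOf_eq]
      constructor
      · rintro ⟨hxσ, -⟩
        exact ⟨hxσ, fun y _ => le_refl _⟩
      · rintro ⟨hxσ, -⟩
        exact ⟨hxσ, fun y hy => by rw [hall y hy, hall x hxσ]⟩
    · push_neg at hM
      obtain ⟨p, hpZ, hpd⟩ := hZcomp.exists_infDist_eq_dist hZne xs
      set u : E := xs - p with hudef
      have hunorm : ‖u‖ = M := by rw [hudef, ← dist_eq_norm, ← hpd]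
      have hvar : ∀ z ∈ zonotope D, ⟪u, z - p⟫ ≤ 0 := by
        refine var_ineq hZconv hpZ (fun z hz => ?_)
        rw [← dist_eq_norm, ← dist_eq_norm, ← hpd]
        exact Metric.infDist_le_dist_of_mem hz
      have hsupp := supp_bound hZcomp hZne hpZ hvar
      have hMM : ⟪u, xs - p⟫ = M * M := by
        calc ⟪u, xs - p⟫ = ⟪u, u⟫ := by rw [← hudef]
          _ = ‖u‖ * ‖u‖ := real_inner_self_eq_norm_mul_norm u
          _ = M * M := by rw [hunorm]
      have hlin : ∀ y ∈ σ, ⟪u, y⟫ ≤ ⟪u, xs⟫ := by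
        intro y hy
        have h1 := hsupp y
        have h2 : Metric.infDist y (zonotope D) ≤ M := hmaxσ y hy
        have h3 : ⟪u, y - p⟫ ≤ M * M := by
          calc ⟪u, y - p⟫ ≤ ‖u‖ * Metric.infDist y (zonotope D) := h1
            _ ≤ M * M := by
                rw [hunorm]
                nlinarith [Metric.infDist_nonneg (x := y) (s := zonotope D)]
        have h5 : ⟪u, y - p⟫ = ⟪u, y⟫ - ⟪u, p⟫ := inner_sub_right _ _ _
        have h6 : ⟪u, xs - p⟫ = ⟪u, xs⟫ - ⟪u, p⟫ := inner_sub_right _ _ _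
        linarith
      obtain ⟨lam, hlam0, hlam1, hlamx⟩ := hrep xs hxsσ
      have hface : ∀ i ∈ V, 0 < lam i → ⟪u, i⟫ = ⟪u, xs⟫ := by
        have hsum0 : ∑ i ∈ V, lam i * (⟪u, xs⟫ - ⟪u, i⟫) = 0 := by
          have e1 : ∑ i ∈ V, lam i * ⟪u, i⟫ = ⟪u, xs⟫ := by
            rw [← hlamx, inner_sum]
            exact Finset.sum_congr rfl fun i _ => (real_inner_smul_right _ _ _).symm
          have e2 : ∑ i ∈ V, lam i * ⟪u, xs⟫ = ⟪u, xs⟫ := by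
            rw [← Finset.sum_mul, hlam1, one_mul]
          calc ∑ i ∈ V, lam i * (⟪u, xs⟫ - ⟪u, i⟫)
              = ∑ i ∈ V, (lam i * ⟪u, xs⟫ - lam i * ⟪u, i⟫) :=
                Finset.sum_congr rfl fun i _ => by ring
            _ = 0 := by rw [Finset.sum_sub_distrib, e1, e2, sub_self]
        intro i hi hpos
        have hnn : ∀ i' ∈ V, 0 ≤ lam i' * (⟪u, xs⟫ - ⟪u, (i':E)⟫) := fun i' hi' =>
          mul_nonneg (hlam0 _ hi') (by linarith [hlin i' (hVσ (Finset.mem_coe.2 hi'))])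
        have hterm := (Finset.sum_eq_zero_iff_of_nonneg hnn).1 hsum0 i hi
        rcases mul_eq_zero.1 hterm with h | h
        · exact absurd h (ne_of_gt hpos)
        · have h' := sub_eq_zero.1 h
          exact h'.symm
      have hvertex : ∀ w ∈ V, p + ((w:E) - xs) ∈ zonotope D := by
        intro w hw
        by_cases hcase : ⟪u, (w:E)⟫ = ⟪u, xs⟫
        · obtain ⟨q, hqZ, hqd⟩ := hZcomp.exists_infDist_eq_dist hZne w
          have hq3 : 0 ≤ ⟪u, p - q⟫ := by
            have hh := hvar q hqZ
            have heq : ⟪u, p - q⟫ = -⟪u, q - p⟫ := by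
              rw [← inner_neg_right]; congr 1; abel
            rw [heq]; linarith
          have hlow : M * M ≤ ⟪u, w - q⟫ := by
            have hsplit : (w:E) - q = (w - xs) + (xs - p) + (p - q) := by abel
            have h1 : ⟪u, (w:E) - xs⟫ = 0 := by
              rw [inner_sub_right, hcase]; ring
            rw [hsplit, inner_add_right, inner_add_right, h1, hMM]
            linarith
          have hwqM : ‖(w:E) - q‖ ≤ M := by
            rw [← dist_eq_norm, ← hqd]
            exact hmaxσ w (hVσ (Finset.mem_coe.2 hw))
          have hCS : ⟪u, (w:E) - q⟫ ≤ ‖u‖ * ‖(w:E) - q‖ := real_inner_le_norm _ _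
          rw [hunorm] at hCS
          have hwqM' : ‖(w:E) - q‖ = M := by nlinarith
          have heqCS : ⟪u, (w:E) - q⟫ = ‖u‖ * ‖(w:E) - q‖ := by
            rw [hunorm, hwqM']
            nlinarith
          have hvec := inner_eq_norm_mul_iff_real.1 heqCS
          rw [hwqM', hunorm] at hvec
          have hwq : u = (w:E) - q := smul_right_injective E (ne_of_gt hM) hvec
          have hq : q = w - u := by rw [hwq]; abel
          have hqq : q = p + ((w:E) - xs) := by rw [hq, hudef]; abel
          rw [← hqq]; exact hqZ
        · have hlt : ⟪u, (w:E)⟫ < ⟪u, xs⟫ :=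
            lt_of_le_of_ne (hlin w (hVσ (Finset.mem_coe.2 hw))) hcase
          set S := V.filter (fun i => 0 < lam i) with hSdef
          have hface' : ∀ i ∈ S, ⟪u, (i:E)⟫ = ⟪u, xs⟫ := fun i hi =>
            hface i (Finset.filter_subset _ _ hi) (Finset.mem_filter.1 hi).2
          have hwS : ∀ i ∈ S, i ≠ w := by
            intro i hi heq
            rw [← heq, hface' i hi] at hlt
            exact lt_irrefl _ hlt
          have hstep := step_mem D hpZ hvar S lam
            (fun i hi => hlam0 i (Finset.filter_subset _ _ hi))
            (fun i hi => hlam1 ▸ Finset.single_le_sum (fun j hj => hlam0 j hj)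
              (Finset.filter_subset _ _ hi))
            w (fun i hi => hrich i (Finset.filter_subset _ _ hi) w hw (hwS i hi))
            (fun i hi => by rw [inner_sub_right, hface' i hi]; linarith)
          have hsum_eq : ∑ i ∈ S, lam i • ((w:E) - i) = w - xs := by
            have hstep2 : ∑ i ∈ S, lam i • ((w:E) - i) = ∑ i ∈ V, lam i • ((w:E) - i) := by
              rw [hSdef]
              refine Finset.sum_filter_of_ne ?_
              intro i hiV hne
              by_contra hnot
              push_neg at hnot
              have h0' : lam i = 0 := le_antisymm hnot (hlam0 i hiV)
              rw [h0', zero_smul] at hne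
              exact hne rfl
            rw [hstep2]
            have hterm : ∀ i ∈ V, lam i • ((w:E) - i) = lam i • (w:E) - lam i • i :=
              fun i _ => smul_sub _ _ _
            rw [Finset.sum_congr rfl hterm, Finset.sum_sub_distrib, ← Finset.sum_smul, hlam1,
              one_smul, hlamx]
          rwa [hsum_eq] at hstep
      have hσS : ∀ y ∈ σ, p + (y - xs) ∈ zonotope D := by
        have hconv : Convex ℝ {y : E | p + (y - xs) ∈ zonotope D} := by
          intro y₁ hy₁ y₂ hy₂ a b ha hb hab
          have heq : p + ((a • y₁ + b • y₂) - xs)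
              = a • (p + (y₁ - xs)) + b • (p + (y₂ - xs)) := by
            have hb' : b = 1 - a := by linarith
            subst hb'
            module
          show p + ((a • y₁ + b • y₂) - xs) ∈ zonotope D
          rw [heq]
          exact hZconv hy₁ hy₂ ha hb hab
        intro y hy
        rw [hσ] at hy
        exact convexHull_min (fun w hw => hvertex w (Finset.mem_coe.1 hw)) hconv hy
      refine ⟨innerSL ℝ u, ?_⟩
      ext y
      simp only [Set.mem_setOf_eq, innerSL_apply_apply]
      constructor
      · rintro ⟨hyσ, hyF⟩
        refine ⟨hyσ, fun w hwσ => ?_⟩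
        have hqZ : p + (y - xs) ∈ zonotope D := hσS y hyσ
        have hyM : Metric.infDist y (zonotope D) = M :=
          le_antisymm (hmaxσ y hyσ) (hyF xs hxsσ)
        have hyu : y - (p + (y - xs)) = u := by rw [hudef]; abel
        have hydist : dist y (p + (y - xs)) = M := by
          rw [dist_eq_norm, hyu, hunorm]
        have hminy : ∀ z ∈ zonotope D, ‖y - (p + (y - xs))‖ ≤ ‖y - z‖ := by
          intro z hz
          rw [← dist_eq_norm, ← dist_eq_norm, hydist, ← hyM]
          exact Metric.infDist_le_dist_of_mem hz
        have hvar_y : ∀ z ∈ zonotope D, ⟪u, z - (p + (y - xs))⟫ ≤ 0 := by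
          intro z hz
          have h := var_ineq hZconv hqZ hminy z hz
          rwa [hyu] at h
        have hsupp_y := supp_bound hZcomp hZne hqZ hvar_y
        have h1 := hsupp_y w
        have h3 : ⟪u, w - (p + (y - xs))⟫ ≤ M * M := by
          calc ⟪u, w - (p + (y - xs))⟫ ≤ ‖u‖ * Metric.infDist w (zonotope D) := h1
            _ ≤ M * M := by
                rw [hunorm]
                nlinarith [Metric.infDist_nonneg (x := w) (s := zonotope D),
                  hmaxσ w hwσ]
        have h4 : ⟪u, y - (p + (y - xs))⟫ = M * M := by
          rw [hyu, ← hunorm]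
          exact real_inner_self_eq_norm_mul_norm u
        rw [inner_sub_right] at h3 h4
        linarith
      · rintro ⟨hyσ, hymax⟩
        refine ⟨hyσ, fun w hwσ => ?_⟩
        have h1 : ⟪u, xs⟫ ≤ ⟪u, y⟫ := hymax xs hxsσ
        have h2 := hsupp y
        have h3 : M * M ≤ ⟪u, y - p⟫ := by
          rw [inner_sub_right] at hMM ⊢
          linarith
        have h5 : M ≤ Metric.infDist y (zonotope D) := by
          rw [hunorm] at h2
          nlinarith
        exact le_trans (hmaxσ w hwσ) h5
end

section
/- Let W be a finite reflection group acting on a Euclidean vector space E and let Z ⊆ E be a W-invariant convex compact polytope. For any v ∈ E, let n = v − proj_Z(v), where proj_Z is the closest-point projection onto Z. Then every closed W-chamber containing v also contains n. -/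
open Set

/-- Let `W` be a finite reflection group on a Euclidean vector space `E`, given by a finite
set `R` of nonzero root vectors (walls are the hyperplanes `rᗮ`, and `W` is generated by the
reflections across them), and let `Z` be a `W`-invariant convex compact polytope.
For `v ∈ E` let `p` be the closest point of `Z` to `v` and `n = v - p`.  Then every closed
`W`-chamber (closure of a connected component of the complement of the union of the walls)
containing `v` also contains `n`. -/
theorem stmt8 {E : Type*} [NormedAddCommGroup E] [InnerProductSpace ℝ E]
    [FiniteDimensional ℝ E]
    (R : Finset E) (hR : ∀ r ∈ R, r ≠ 0)
    (W : Subgroup (E ≃ₗᵢ[ℝ] E))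
    (hW : W = Subgroup.closure
      {g : E ≃ₗᵢ[ℝ] E | ∃ r ∈ R, g = Submodule.reflection (Submodule.span ℝ {r})ᗮ})
    (hfin : Finite W)
    (S : Finset E) (Z : Set E) (hZ : Z = convexHull ℝ (S : Set E)) (hZne : Z.Nonempty)
    (hZinv : ∀ g ∈ W, (g : E ≃ₗᵢ[ℝ] E) '' Z = Z)
    (v p : E) (hpZ : p ∈ Z) (hpmin : ∀ y ∈ Z, dist v p ≤ dist v y)
    (Ω : Set E) (hΩ : Ω = {x : E | ∀ r ∈ R, (inner ℝ r x : ℝ) ≠ 0}) :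
    ∀ C : Set E, (∃ x ∈ Ω, C = closure (connectedComponentIn Ω x)) →
      v ∈ C → v - p ∈ C := by
  have hconv : Convex ℝ Z := hZ ▸ convex_convexHull ℝ _
  -- the variational inequality characterizing the closest point
  have hvar : ∀ z ∈ Z, (inner ℝ (v - p) (z - p) : ℝ) ≤ 0 := by
    have hne : Nonempty Z := ⟨⟨p, hpZ⟩⟩
    rw [← norm_eq_iInf_iff_real_inner_le_zero hconv hpZ]
    apply le_antisymm
    · exact le_ciInf fun w => by simpa [dist_eq_norm] using hpmin w w.2
    · exact ciInf_le ⟨0, fun _ ⟨w, hw⟩ => hw ▸ norm_nonneg _⟩ (⟨p, hpZ⟩ : Z)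
  -- key inequality per root, obtained by reflecting `p`
  have keyB : ∀ r ∈ R, 0 ≤ (inner ℝ r p : ℝ) * (inner ℝ r (v - p) : ℝ) := by
    intro r hr
    set g : E ≃ₗᵢ[ℝ] E := Submodule.reflection (Submodule.span ℝ {r})ᗮ with hg
    have hgW : g ∈ W := by
      rw [hW]; exact Subgroup.subset_closure ⟨r, hr, rfl⟩
    have hgpZ : g p ∈ Z := by
      rw [← hZinv g hgW]; exact ⟨p, hpZ, rfl⟩
    have hrefl : g p = p - (2 * ((inner ℝ r p : ℝ) / ‖r‖ ^ 2)) • r := by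
      rw [hg, Submodule.reflection_apply, Submodule.starProjection_orthogonal_val,
        Submodule.starProjection_singleton]
      simp only [RCLike.ofReal_real_eq_id, id_eq, two_smul, mul_smul]
      abel
    have h1 := hvar (g p) hgpZ
    rw [hrefl] at h1
    have h2 : (inner ℝ (v - p) ((p - (2 * ((inner ℝ r p : ℝ) / ‖r‖ ^ 2)) • r) - p) : ℝ)
        = -(2 * ((inner ℝ r p : ℝ) / ‖r‖ ^ 2)) * (inner ℝ r (v - p) : ℝ) := by
      have h3 : (p - (2 * ((inner ℝ r p : ℝ) / ‖r‖ ^ 2)) • r) - p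
          = -((2 * ((inner ℝ r p : ℝ) / ‖r‖ ^ 2)) • r) := by abel
      rw [h3, inner_neg_right, real_inner_smul_right, real_inner_comm (v - p) r]
      ring
    rw [h2] at h1
    have hrn : (0:ℝ) < ‖r‖ ^ 2 := pow_pos (norm_pos_iff.mpr (hR r hr)) 2
    rw [neg_mul, neg_nonpos] at h1
    have h4 : (0:ℝ) ≤ (2 * ((inner ℝ r p : ℝ) / ‖r‖ ^ 2) * (inner ℝ r (v - p) : ℝ)) * ‖r‖ ^ 2 :=
      mul_nonneg h1 hrn.le
    have h5 : (2 * ((inner ℝ r p : ℝ) / ‖r‖ ^ 2) * (inner ℝ r (v - p) : ℝ)) * ‖r‖ ^ 2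
        = 2 * ((inner ℝ r p : ℝ) * (inner ℝ r (v - p) : ℝ)) := by
      field_simp
      rw [div_eq_iff (norm_pos_iff.mpr (hR r hr)).ne']
      ring
    rw [h5] at h4
    linarith
  rintro C ⟨x, hxΩ, rfl⟩ hvC
  have hΩ' : ∀ y ∈ Ω, ∀ r ∈ R, (inner ℝ r y : ℝ) ≠ 0 := by
    intro y hy r hr; rw [hΩ] at hy; exact hy r hr
  set K := connectedComponentIn Ω x with hK
  have hKΩ : K ⊆ Ω := connectedComponentIn_subset Ω x
  have hxK : x ∈ K := mem_connectedComponentIn hxΩ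
  -- sign of every root functional on the closed chamber matches its sign at x
  have keyA : ∀ r ∈ R, ∀ y ∈ closure K, 0 ≤ (inner ℝ r x : ℝ) * (inner ℝ r y : ℝ) := by
    intro r hr
    have hcont : Continuous fun y : E => (inner ℝ r y : ℝ) := continuous_const.inner continuous_id
    have hsubset : K ⊆ {y : E | 0 ≤ (inner ℝ r x : ℝ) * (inner ℝ r y : ℝ)} := by
      intro y hy
      by_contra hneg
      simp only [mem_setOf_eq, not_le] at hneg
      -- 0 lies strictly between inner ℝ r x and inner ℝ r y, contradiction with IVT
      have hpre : IsPreconnected ((fun y : E => (inner ℝ r y : ℝ)) '' K) :=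
        isPreconnected_connectedComponentIn.image _ hcont.continuousOn
      have hord := hpre.ordConnected
      have h0 : (0:ℝ) ∈ (fun y : E => (inner ℝ r y : ℝ)) '' K := by
        rcases lt_or_ge (inner ℝ r x : ℝ) 0 with hx0 | hx0
        · have hy0 : (0:ℝ) < (inner ℝ r y : ℝ) := by nlinarith
          exact hord.out ⟨x, hxK, rfl⟩ ⟨y, hy, rfl⟩ ⟨hx0.le, hy0.le⟩
        · have hx0' : (0:ℝ) < (inner ℝ r x : ℝ) :=
            hx0.lt_of_ne (Ne.symm (hΩ' x hxΩ r hr))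
          have hy0 : (inner ℝ r y : ℝ) < 0 := by nlinarith
          exact hord.out ⟨y, hy, rfl⟩ ⟨x, hxK, rfl⟩ ⟨hy0.le, hx0'.le⟩
      rcases h0 with ⟨z, hzK, hz0⟩
      exact hΩ' z (hKΩ hzK) r hr (by simpa using hz0)
    have hclosed : IsClosed {y : E | 0 ≤ (inner ℝ r x : ℝ) * (inner ℝ r y : ℝ)} :=
      isClosed_le continuous_const (continuous_const.mul hcont)
    intro y hy
    exact (closure_minimal hsubset hclosed) hy
  -- combine: sign of every root functional at v - p is compatible with x
  have keyC : ∀ r ∈ R, 0 ≤ (inner ℝ r x : ℝ) * (inner ℝ r (v - p) : ℝ) := by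
    intro r hr
    have ha := keyA r hr v hvC
    have hb := keyB r hr
    have hab : (inner ℝ r (v - p) : ℝ) = (inner ℝ r v : ℝ) - (inner ℝ r p : ℝ) :=
      inner_sub_right _ _ _
    rw [hab] at hb ⊢
    have hc : (inner ℝ r x : ℝ) ≠ 0 := hΩ' x hxΩ r hr
    set a := (inner ℝ r v : ℝ)
    set b := (inner ℝ r p : ℝ)
    set c := (inner ℝ r x : ℝ)
    rcases ha.lt_or_eq with h1' | h1'
    · have hkey : 0 ≤ (c * a) * (c * (a - b)) := by
        nlinarith [mul_nonneg (sq_nonneg c) hb, mul_nonneg (sq_nonneg c) (sq_nonneg (a - b))]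
      by_contra hcon
      push_neg at hcon
      nlinarith [mul_pos h1' (neg_pos.2 hcon)]
    · have ha0 : a = 0 := by
        rcases mul_eq_zero.mp h1'.symm with h | h
        · exact absurd h hc
        · exact h
      have hb0 : b = 0 := by nlinarith [sq_nonneg b]
      rw [ha0, hb0]
      simp
  -- the open cone U is inside the component, and v - p is in its closure
  set U : Set E := {y : E | ∀ r ∈ R, 0 < (inner ℝ r x : ℝ) * (inner ℝ r y : ℝ)} with hU
  have hUconv : Convex ℝ U := by
    intro y hy z hz a b ha hb hab
    intro r hr
    have h1 := hy r hr
    have h2 := hz r hr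
    have : (inner ℝ r (a • y + b • z) : ℝ)
        = a * (inner ℝ r y : ℝ) + b * (inner ℝ r z : ℝ) := by
      rw [inner_add_right, real_inner_smul_right, real_inner_smul_right]
    rw [this]
    rcases ha.eq_or_lt with ha' | ha'
    · have hb1 : b = 1 := by linarith
      rw [← ha', hb1]
      simpa using h2
    · nlinarith [mul_pos ha' h1, mul_nonneg hb h2.le]
  have hUΩ : U ⊆ Ω := by
    intro y hy
    rw [hΩ]
    intro r hr h0
    have := hy r hr
    rw [h0, mul_zero] at this
    exact lt_irrefl 0 this
  have hxU : x ∈ U := fun r hr => mul_self_pos.2 (hΩ' x hxΩ r hr)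
  have hUK : U ⊆ K := hUconv.isPreconnected.subset_connectedComponentIn hxU hUΩ
  -- v - p is a limit of points of U along the segment towards x
  have hlim : Filter.Tendsto (fun t : ℝ => (v - p) + t • (x - (v - p)))
      (nhdsWithin 0 (Ioi 0)) (nhds (v - p)) := by
    have : Filter.Tendsto (fun t : ℝ => (v - p) + t • (x - (v - p)))
        (nhds 0) (nhds (v - p)) := by
      have hcont : Continuous fun t : ℝ => (v - p) + t • (x - (v - p)) :=
        continuous_const.add (continuous_id.smul continuous_const)
      have := hcont.tendsto 0
      simpa using this
    exact this.mono_left nhdsWithin_le_nhds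
  have hmemU : ∀ᶠ t in nhdsWithin (0:ℝ) (Ioi 0),
      (v - p) + t • (x - (v - p)) ∈ U := by
    filter_upwards [Ioc_mem_nhdsGT_of_mem (⟨le_refl (0:ℝ), one_pos⟩ : (0:ℝ) ∈ Ico 0 1)]
      with t ht
    intro r hr
    have hc2 : 0 < (inner ℝ r x : ℝ) * (inner ℝ r x : ℝ) := mul_self_pos.2 (hΩ' x hxΩ r hr)
    have hd := keyC r hr
    have : (inner ℝ r ((v - p) + t • (x - (v - p))) : ℝ)
        = (1 - t) * (inner ℝ r (v - p) : ℝ) + t * (inner ℝ r x : ℝ) := by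
      simp only [inner_add_right, inner_sub_right, real_inner_smul_right]
      ring
    rw [this]
    have ht0 : 0 < t := ht.1
    have ht1 : t ≤ 1 := ht.2
    nlinarith [mul_nonneg (sub_nonneg.2 ht1) hd, mul_pos ht0 hc2]
  have : v - p ∈ closure U := mem_closure_of_tendsto hlim hmemU
  exact closure_mono hUK this
end

section
/- Let x ∈ Z(D) be a point of the zonotope Z(D) = Σ_{z∈D}[0,z] of a finite set D ⊆ E, written as x = Σ_{z∈D} α_z z with 0 ≤ α_z ≤ 1. Consider the complete directed graph whose vertices are the vertices of a polytope σ for which D is sufficiently rich, with the edge from v to w labelled α_{w−v}. Then the coefficients can be modified, preserving the identity x = Σ α_z z and the bounds 0 ≤ α_z ≤ 1, so that the resulting labelled directed graph contains no directed cycle all of whose edge labels are strictly positive; consequently there is a vertex v of σ all of whose outgoing edge labels are 0. -/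
open Finset

private lemma zono_step {E : Type*} [NormedAddCommGroup E] [InnerProductSpace ℝ E]
    (D V : Finset E)
    (hrich : ∀ v ∈ V, ∀ w ∈ V, v ≠ w → w - v ∈ D)
    (α : E → ℝ) (hα : ∀ z ∈ D, 0 ≤ α z ∧ α z ≤ 1)
    (m : ℕ) (c : ℕ → E) (hm : 0 < m) (hcV : ∀ j ≤ m, c j ∈ V)
    (hc0 : c 0 = c m) (hcyc : ∀ j < m, c j ≠ c (j + 1) ∧ 0 < α (c (j + 1) - c j)) :
    ∃ α₂ : E → ℝ, (∀ z ∈ D, 0 ≤ α₂ z ∧ α₂ z ≤ 1) ∧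
      (∑ z ∈ D, α₂ z • z) = ∑ z ∈ D, α z • z ∧
      (D.filter fun z => 0 < α₂ z).card < (D.filter fun z => 0 < α z).card := by
  classical
  set e : ℕ → E := fun j => c (j + 1) - c j with he
  have heD : ∀ j < m, e j ∈ D := fun j hj =>
    hrich _ (hcV j hj.le) _ (hcV (j + 1) hj) (hcyc j hj).1
  set mult : E → ℕ := fun z => ((range m).filter fun j => e j = z).card with hmultdef
  have hmultpos : ∀ j < m, 0 < mult (e j) := fun j hj =>
    card_pos.2 ⟨j, mem_filter.2 ⟨mem_range.2 hj, rfl⟩⟩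
  obtain ⟨j₀, hj₀, hmin⟩ := Finset.exists_min_image (range m)
    (fun j => α (e j) / (mult (e j) : ℝ)) ⟨0, mem_range.2 hm⟩
  have hj₀m : j₀ < m := mem_range.1 hj₀
  set t : ℝ := α (e j₀) / (mult (e j₀) : ℝ) with ht
  have htpos : 0 < t :=
    div_pos (hcyc j₀ hj₀m).2 (Nat.cast_pos.2 (hmultpos j₀ hj₀m))
  have hkey : ∀ z ∈ D, (mult z : ℝ) * t ≤ α z := by
    intro z hz
    rcases Nat.eq_zero_or_pos (mult z) with h0 | hpos
    · simpa [h0] using (hα z hz).1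
    · obtain ⟨j, hjf⟩ := card_pos.1 hpos
      obtain ⟨hjr, hje⟩ := mem_filter.1 hjf
      have hmle := hmin j hjr
      rw [hje] at hmle
      have hmz : (0 : ℝ) < (mult z : ℝ) := Nat.cast_pos.2 hpos
      calc (mult z : ℝ) * t ≤ (mult z : ℝ) * (α z / (mult z : ℝ)) :=
            mul_le_mul_of_nonneg_left hmle hmz.le
        _ = α z := by field_simp
  have hmtnonneg : ∀ z : E, 0 ≤ (mult z : ℝ) * t :=
    fun z => mul_nonneg (Nat.cast_nonneg _) htpos.le
  have hj₀zero : α (e j₀) - (mult (e j₀) : ℝ) * t = 0 := by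
    have hmz : ((mult (e j₀) : ℝ)) ≠ 0 := ne_of_gt (Nat.cast_pos.2 (hmultpos j₀ hj₀m))
    rw [ht]
    field_simp
    ring
  refine ⟨fun z => α z - (mult z : ℝ) * t, ?_, ?_, ?_⟩
  · intro z hz
    exact ⟨sub_nonneg.2 (hkey z hz),
      le_trans (sub_le_self (α z) (hmtnonneg z)) (hα z hz).2⟩
  · have hfiber : ∑ z ∈ D, ∑ j ∈ (range m).filter (fun j => e j = z), e j
        = ∑ j ∈ range m, e j :=
      Finset.sum_fiberwise_of_maps_to (fun j hj => heD j (mem_range.1 hj)) e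
    have hinner : ∀ z ∈ D, ∑ j ∈ (range m).filter (fun j => e j = z), e j
        = (mult z : ℝ) • z := by
      intro z hz
      rw [Finset.sum_congr rfl (fun j hj => (mem_filter.1 hj).2),
        Finset.sum_const]
      exact (Nat.cast_smul_eq_nsmul ℝ _ _).symm
    have htel : ∑ j ∈ range m, e j = 0 := by
      rw [he]
      rw [Finset.sum_range_sub c, ← hc0, sub_self]
    have hsum0 : ∑ z ∈ D, (mult z : ℝ) • z = 0 := by
      rw [← Finset.sum_congr rfl hinner, hfiber, htel]
    have hexp : ∑ z ∈ D, (α z - (mult z : ℝ) * t) • z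
        = ∑ z ∈ D, α z • z - t • ∑ z ∈ D, (mult z : ℝ) • z := by
      rw [Finset.smul_sum, ← Finset.sum_sub_distrib]
      exact Finset.sum_congr rfl fun z _ => by module
    rw [hexp, hsum0, smul_zero, sub_zero]
  · apply Finset.card_lt_card
    rw [Finset.ssubset_iff_of_subset]
    · refine ⟨e j₀, mem_filter.2 ⟨heD j₀ hj₀m, (hcyc j₀ hj₀m).2⟩, ?_⟩
      intro hmem
      have hmem2 : (0:ℝ) < α (e j₀) - (mult (e j₀) : ℝ) * t := (mem_filter.1 hmem).2
      rw [hj₀zero] at hmem2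
      exact lt_irrefl 0 hmem2
    · intro z hz
      obtain ⟨hzD, hzpos⟩ := mem_filter.1 hz
      exact mem_filter.2 ⟨hzD, lt_of_lt_of_le hzpos (sub_le_self (α z) (hmtnonneg z))⟩

private lemma zono_key {E : Type*} [NormedAddCommGroup E] [InnerProductSpace ℝ E]
    (D V : Finset E)
    (hrich : ∀ v ∈ V, ∀ w ∈ V, v ≠ w → w - v ∈ D) :
    ∀ n : ℕ, ∀ α : E → ℝ, (D.filter fun z => 0 < α z).card < n →
    (∀ z ∈ D, 0 ≤ α z ∧ α z ≤ 1) →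
    ∃ α' : E → ℝ, (∀ z ∈ D, 0 ≤ α' z ∧ α' z ≤ 1) ∧
      (∑ z ∈ D, α' z • z) = ∑ z ∈ D, α z • z ∧
      ¬ ∃ (m : ℕ) (c : ℕ → E), 0 < m ∧ (∀ j ≤ m, c j ∈ V) ∧ c 0 = c m ∧
        ∀ j < m, c j ≠ c (j + 1) ∧ 0 < α' (c (j + 1) - c j) := by
  intro n
  induction n with
  | zero => intro α hcard _; exact absurd hcard (Nat.not_lt_zero _)
  | succ n ih =>
    intro α hcard hα
    by_cases hcyc : ∃ (m : ℕ) (c : ℕ → E), 0 < m ∧ (∀ j ≤ m, c j ∈ V) ∧ c 0 = c m ∧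
        ∀ j < m, c j ≠ c (j + 1) ∧ 0 < α (c (j + 1) - c j)
    · obtain ⟨m, c, hm, hcV, hc0, hpos⟩ := hcyc
      obtain ⟨α₂, hα₂, hsum, hlt⟩ := zono_step D V hrich α hα m c hm hcV hc0 hpos
      obtain ⟨α', h1, h2, h3⟩ := ih α₂ (by omega) hα₂
      exact ⟨α', h1, h2.trans hsum, h3⟩
    · exact ⟨α, hα, rfl, hcyc⟩

/-- Let `x = Σ_{z ∈ D} α_z z` be a point of the zonotope of `D`, with `0 ≤ α_z ≤ 1`, and let
`V` be the vertex set of a polytope for which `D` is sufficiently rich.  Then the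
coefficients can be modified, preserving `x = Σ α'_z z` and `0 ≤ α'_z ≤ 1`, so that the
complete directed graph on `V` with edge `v → w` labelled `α'_{w-v}` has no directed cycle
all of whose labels are strictly positive; consequently some vertex `v ∈ V` has all outgoing
labels zero. -/
theorem stmt9 {E : Type*} [NormedAddCommGroup E] [InnerProductSpace ℝ E]
    (D V : Finset E) (hVne : V.Nonempty)
    (hrich : ∀ v ∈ V, ∀ w ∈ V, v ≠ w → w - v ∈ D)
    (α : E → ℝ) (hα : ∀ z ∈ D, 0 ≤ α z ∧ α z ≤ 1)
    (x : E) (hx : x = ∑ z ∈ D, α z • z) :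
    ∃ α' : E → ℝ, (∀ z ∈ D, 0 ≤ α' z ∧ α' z ≤ 1) ∧ x = ∑ z ∈ D, α' z • z ∧
      (¬ ∃ (m : ℕ) (c : ℕ → E), 0 < m ∧ (∀ j ≤ m, c j ∈ V) ∧ c 0 = c m ∧
        ∀ j < m, c j ≠ c (j + 1) ∧ 0 < α' (c (j + 1) - c j)) ∧
      ∃ v ∈ V, ∀ w ∈ V, w ≠ v → α' (w - v) = 0 := by
  obtain ⟨α', h1, h2, h3⟩ := zono_key D V hrich
    ((D.filter fun z => 0 < α z).card + 1) α (by omega) hα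
  refine ⟨α', h1, by rw [hx, h2], h3, ?_⟩
  by_contra hcon
  push_neg at hcon
  have hstep : ∀ v : E, v ∈ V → ∃ w, w ∈ V ∧ w ≠ v ∧ 0 < α' (w - v) := by
    intro v hv
    obtain ⟨w, hw, hne, hne0⟩ := hcon v hv
    exact ⟨w, hw, hne,
      lt_of_le_of_ne (h1 _ (hrich v hv w hw hne.symm)).1 (Ne.symm hne0)⟩
  classical
  set f : E → E := fun v => if h : v ∈ V then (hstep v h).choose else v with hf
  have hfV : ∀ v ∈ V, f v ∈ V := by
    intro v hv; rw [hf]; simp only [hv, dif_pos]; exact (hstep v hv).choose_spec.1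
  have hfne : ∀ v ∈ V, f v ≠ v := by
    intro v hv; rw [hf]; simp only [hv, dif_pos]; exact (hstep v hv).choose_spec.2.1
  have hfpos : ∀ v ∈ V, 0 < α' (f v - v) := by
    intro v hv; rw [hf]; simp only [hv, dif_pos]; exact (hstep v hv).choose_spec.2.2
  obtain ⟨v₀, hv₀⟩ := hVne
  set g : ℕ → E := fun k => f^[k] v₀ with hg
  have hgV : ∀ k, g k ∈ V := by
    intro k
    induction k with
    | zero => exact hv₀
    | succ k ihk =>
      show f^[k + 1] v₀ ∈ V
      rw [Function.iterate_succ_apply']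
      exact hfV _ ihk
  have hgsucc : ∀ k, g (k + 1) = f (g k) := fun k => Function.iterate_succ_apply' f k v₀
  obtain ⟨i, hi, j, hj, hij, hgij⟩ :=
    Finset.exists_ne_map_eq_of_card_lt_of_maps_to
      (s := range (V.card + 1)) (t := V) (by simp) (fun k _ => hgV k)
  wlog hlt : i < j generalizing i j
  · exact this j hj i hi hij.symm hgij.symm (by omega)
  apply h3
  refine ⟨j - i, fun k => g (i + k), by omega, fun k _ => hgV _, ?_, ?_⟩
  · show g (i + 0) = g (i + (j - i))
    have h0 : i + 0 = i := by omega
    have hji : i + (j - i) = j := by omega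
    rw [h0, hji]
    exact hgij
  · intro k _
    have hstepk : g (i + (k + 1)) = f (g (i + k)) := by
      have : i + (k + 1) = (i + k) + 1 := by omega
      rw [this, hgsucc]
    show g (i + k) ≠ g (i + (k + 1)) ∧ 0 < α' (g (i + (k + 1)) - g (i + k))
    rw [hstepk]
    exact ⟨(hfne _ (hgV _)).symm, hfpos _ (hgV _)⟩
end

section
/- Let P be a finite poset (the face poset of cells) equipped with a binary relation σ ⊸ τ ('σ lies in the horizontal link of τ') satisfying: (1) if τ ⊸ σ and τ ≥ τ' ≥ σ then τ' ⊸ σ; (2) if τ ⊸ σ and τ ≥ σ' ≥ σ then τ ⊸ σ'; (3) ⊸ is transitive; (4) if τ ⊸ σ₁ and τ ⊸ σ₂ and σ₁ ∧ σ₂ exists then τ ⊸ (σ₁ ∧ σ₂); and additionally (general position): if τ ⊸ σ₁ and τ ⊸ σ₂ then σ₁ ∧ σ₂ exists. Then for every τ with τ ⊸ τ, the set {σ ≤ τ : τ ⊸ σ} has a minimum element τ^min, and τ ⊸ σ holds if and only if τ^min ≤ σ ≤ τ. -/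
/-- Abstract version of the `τ^min` lemma.  `P` is a finite poset (face poset of cells) with
a relation `r τ σ` ("`τ` lies in the horizontal link of `σ`", in particular `σ ≤ τ`)
satisfying: (1) faces: `r τ σ → σ ≤ τ' ≤ τ → r τ' σ`; (2) `r τ σ → σ ≤ σ' ≤ τ → r τ σ'`;
(3) transitivity; (4) if `r τ σ₁`, `r τ σ₂` and the meet `σ₁ ∧ σ₂` exists then `r τ (σ₁ ∧ σ₂)`;
and (general position) if `r τ σ₁` and `r τ σ₂` then the meet exists.  Then for every `τ`
with `r τ τ` the set `{σ ≤ τ | r τ σ}` has a minimum `τ^min`, and `r τ σ ↔ τ^min ≤ σ ≤ τ`. -/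
theorem stmt10 {P : Type*} [PartialOrder P] [Fintype P]
    (r : P → P → Prop)
    (hle : ∀ τ σ, r τ σ → σ ≤ τ)
    (h1 : ∀ τ σ τ', r τ σ → σ ≤ τ' → τ' ≤ τ → r τ' σ)
    (h2 : ∀ τ σ σ', r τ σ → σ ≤ σ' → σ' ≤ τ → r τ σ')
    (h3 : ∀ τ σ' σ, r τ σ' → r σ' σ → r τ σ)
    (h4 : ∀ τ σ₁ σ₂ m, r τ σ₁ → r τ σ₂ → IsGLB {σ₁, σ₂} m → r τ m)
    (hgen : ∀ τ σ₁ σ₂, r τ σ₁ → r τ σ₂ → ∃ m, IsGLB {σ₁, σ₂} m)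
    (τ : P) (hτ : r τ τ) :
    ∃ τmin : P, IsLeast {σ | r τ σ} τmin ∧ ∀ σ, r τ σ ↔ τmin ≤ σ ∧ σ ≤ τ := by
  classical
  obtain ⟨m, hm, hmin⟩ : ∃ m ∈ ({σ | r τ σ} : Set P).toFinset,
      ∀ x ∈ ({σ | r τ σ} : Set P).toFinset, ¬ x < m := by
    obtain ⟨m, hm, hmin⟩ := Finset.exists_minimal
      (s := ({σ | r τ σ} : Set P).toFinset) ⟨τ, by simp [hτ]⟩
    exact ⟨m, hm, fun x hx hlt => lt_irrefl x (lt_of_lt_of_le hlt (hmin hx hlt.le))⟩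
  rw [Set.mem_toFinset] at hm
  have hleast : IsLeast {σ | r τ σ} m := by
    refine ⟨hm, fun σ hσ => ?_⟩
    obtain ⟨g, hg⟩ := hgen τ m σ hm hσ
    have hgS : r τ g := h4 τ m σ g hm hσ hg
    have hgm : g ≤ m := hg.1 (by simp)
    have : g = m := by
      by_contra hne
      exact hmin g (Set.mem_toFinset.mpr hgS) (lt_of_le_of_ne hgm hne)
    exact this ▸ hg.1 (by simp)
  refine ⟨m, hleast, fun σ => ⟨fun h => ⟨hleast.2 h, hle τ σ h⟩, fun ⟨h₁, h₂⟩ =>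
    h2 τ m σ hm h₁ h₂⟩⟩
end

section
/- Suppose in a poset P with moves as above one has σ₁ ↗ τ₁ ↘ σ₂, and suppose the join σ₁ ∨ σ₂ exists with τ₁ ⊸ σ₁ ∨ σ₂ (which holds under property (2) of ⊸ since σ₁ ≤ σ₁ ∨ σ₂ ≤ τ₁). Then σ₁ = (σ₁ ∨ σ₂)^min and σ₁ ∨ σ₂ ↘ σ₂. In particular σ₁ ↗ (σ₁ ∨ σ₂) ↘ σ₂ unless σ₁ ↘ σ₂. -/
/-- Abstract shortening lemma.  In a poset with minimum-face map `m` (so `τ ⊸ σ` means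
`m τ ≤ σ ≤ τ`, `σ ↗ τ` means `m τ = σ ≠ τ`, `τ ↘ σ` means `σ < τ` and not `τ ⊸ σ`):
if `σ₁ ↗ τ₁ ↘ σ₂` and the join `j = σ₁ ∨ σ₂` exists with `j ≤ τ₁` (so `τ₁ ⊸ j`), then
`σ₁ = j^min` and `j ↘ σ₂`; in particular `σ₁ ↗ j ↘ σ₂` unless `σ₁ ↘ σ₂`. -/
theorem stmt13 {P : Type*} [PartialOrder P]
    (m : P → P) (hle : ∀ τ, m τ ≤ τ)
    (hmin : ∀ τ σ, m τ ≤ σ → σ ≤ τ → m σ = m τ)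
    (σ₁ τ₁ σ₂ j : P)
    (hup : m τ₁ = σ₁ ∧ σ₁ ≠ τ₁)
    (hdown : σ₂ < τ₁ ∧ ¬ (m τ₁ ≤ σ₂ ∧ σ₂ ≤ τ₁))
    (hj : IsLUB {σ₁, σ₂} j) (hjle : j ≤ τ₁) :
    m j = σ₁ ∧ (σ₂ < j ∧ ¬ (m j ≤ σ₂ ∧ σ₂ ≤ j)) ∧
      (¬ (σ₂ < σ₁ ∧ ¬ (m σ₁ ≤ σ₂ ∧ σ₂ ≤ σ₁)) → m j = σ₁ ∧ σ₁ ≠ j) := by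
  obtain ⟨hm, hne⟩ := hup
  obtain ⟨hlt, hnd⟩ := hdown
  have hσ₁j : σ₁ ≤ j := hj.1 (by simp)
  have hσ₂j : σ₂ ≤ j := hj.1 (by simp)
  have hns : ¬ σ₁ ≤ σ₂ := fun h => hnd ⟨hm ▸ h, hlt.le⟩
  have hmj : m j = σ₁ := by
    have := hmin τ₁ j (hm ▸ hσ₁j) hjle
    rw [this, hm]
  refine ⟨hmj, ⟨lt_of_le_of_ne hσ₂j (fun h => hns (h ▸ hσ₁j)),
    fun h => hns (hmj ▸ h.1)⟩, fun h => ⟨hmj, fun hji => ?_⟩⟩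
  apply h
  have hσ₂σ₁ : σ₂ < σ₁ := lt_of_le_of_ne (hji ▸ hσ₂j) (fun h => hns h.ge)
  refine ⟨hσ₂σ₁, fun hc => hns ?_⟩
  have : m σ₁ = σ₁ := by rw [hji] at hmj ⊢; exact hmj
  exact this ▸ hc.1
end

section
/- Let E be a Euclidean vector space, Z ⊆ E a convex compact set with Z = −Z, and set S₀ = {(x₊, x₋) ∈ E × E : x₊ − x₋ ∈ Z}. For a point x = (x₊, x₋) with h(x) := dist(x₊ − x₋, Z) > 0, let p = proj_Z(x₊ − x₋) and n = (x₊ − x₋) − p. Then the closest point of S₀ to x (in the product Euclidean metric) is proj_{S₀}(x) = (x₊ − n/2, x₋ + n/2), and dist(x, S₀) = h(x)/√2, i.e. h(x) = √2 · dist(x, S₀). -/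
open scoped Pointwise

/-- The ℓ²-product (Euclidean) distance on `E × E`. -/
noncomputable def pd {E : Type*} [NormedAddCommGroup E] (a b : E × E) : ℝ :=
  Real.sqrt (dist a.1 b.1 ^ 2 + dist a.2 b.2 ^ 2)

/-- Let `Z ⊆ E` be convex, compact, nonempty with `Z = -Z`, and
`S₀ = {(x₊,x₋) | x₊ - x₋ ∈ Z}`.  For `x = (x₊,x₋)` with `h(x) = dist(x₊ - x₋, Z) > 0`,
if `p = proj_Z(x₊ - x₋)` and `n = (x₊ - x₋) - p`, then the closest point of `S₀` to `x`
in the ℓ²-product metric is `(x₊ - n/2, x₋ + n/2)`, and `h(x) = √2 · dist(x, S₀)`.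
(`xp` stands for `x₊`, `xm` for `x₋`.) -/
theorem stmt17 {E : Type*} [NormedAddCommGroup E] [InnerProductSpace ℝ E]
    (Z : Set E) (hZc : Convex ℝ Z) (hZk : IsCompact Z) (hZne : Z.Nonempty) (hsym : Z = -Z)
    (S₀ : Set (E × E)) (hS₀ : S₀ = {q : E × E | q.1 - q.2 ∈ Z})
    (xp xm : E) (hpos : 0 < Metric.infDist (xp - xm) Z)
    (p : E) (hpZ : p ∈ Z) (hpmin : ∀ y ∈ Z, dist (xp - xm) p ≤ dist (xp - xm) y) :
    (xp - (1 / 2 : ℝ) • (xp - xm - p), xm + (1 / 2 : ℝ) • (xp - xm - p)) ∈ S₀ ∧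
    (∀ y ∈ S₀,
      pd (xp, xm) (xp - (1 / 2 : ℝ) • (xp - xm - p), xm + (1 / 2 : ℝ) • (xp - xm - p)) ≤
        pd (xp, xm) y) ∧
    Metric.infDist (xp - xm) Z =
      Real.sqrt 2 *
        pd (xp, xm) (xp - (1 / 2 : ℝ) • (xp - xm - p), xm + (1 / 2 : ℝ) • (xp - xm - p)) := by
  set n : E := xp - xm - p with hn
  have hinf : Metric.infDist (xp - xm) Z = ‖n‖ := by
    apply le_antisymm
    · simpa [hn, dist_eq_norm] using Metric.infDist_le_dist_of_mem hpZ
    · rw [hn, ← dist_eq_norm]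
      by_contra h
      push_neg at h
      obtain ⟨y, hyZ, hlt⟩ := (Metric.infDist_lt_iff hZne).1 h
      exact absurd (hpmin y hyZ) (not_le.2 hlt)
  -- pd to the candidate point
  have hd1 : dist xp (xp - (1 / 2 : ℝ) • n) = ‖n‖ / 2 := by
    rw [dist_eq_norm]
    simp [norm_smul]
    ring
  have hd2 : dist xm (xm + (1 / 2 : ℝ) • n) = ‖n‖ / 2 := by
    rw [dist_eq_norm]
    simp [norm_smul]
    ring
  have hpdq : pd (xp, xm) (xp - (1 / 2 : ℝ) • n, xm + (1 / 2 : ℝ) • n) =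
      Real.sqrt (‖n‖ ^ 2 / 2) := by
    simp only [pd, hd1, hd2]
    ring_nf
  have hmem : (xp - (1 / 2 : ℝ) • n, xm + (1 / 2 : ℝ) • n) ∈ S₀ := by
    rw [hS₀]
    show xp - (1 / 2 : ℝ) • n - (xm + (1 / 2 : ℝ) • n) ∈ Z
    have : xp - (1 / 2 : ℝ) • n - (xm + (1 / 2 : ℝ) • n) = p := by
      rw [hn]
      module
    rwa [this]
  refine ⟨hmem, ?_, ?_⟩
  · intro y hy
    rw [hS₀] at hy
    have hyZ : y.1 - y.2 ∈ Z := hy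
    have h1 : ‖n‖ ≤ ‖(xp - y.1) - (xm - y.2)‖ := by
      have := hpmin (y.1 - y.2) hyZ
      rw [dist_eq_norm, dist_eq_norm] at this
      calc ‖n‖ = ‖xp - xm - p‖ := by rw [hn]
        _ ≤ ‖xp - xm - (y.1 - y.2)‖ := this
        _ = ‖(xp - y.1) - (xm - y.2)‖ := by rw [show xp - xm - (y.1 - y.2) = (xp - y.1) - (xm - y.2) by abel]
    have h2 : ‖(xp - y.1) - (xm - y.2)‖ ≤ ‖xp - y.1‖ + ‖xm - y.2‖ := norm_sub_le _ _
    have h3 : ‖n‖ ^ 2 / 2 ≤ ‖xp - y.1‖ ^ 2 + ‖xm - y.2‖ ^ 2 := by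
      nlinarith [norm_nonneg n, norm_nonneg (xp - y.1), norm_nonneg (xm - y.2),
        norm_nonneg ((xp - y.1) - (xm - y.2)), sq_nonneg (‖xp - y.1‖ - ‖xm - y.2‖),
        mul_self_le_mul_self (norm_nonneg n) (h1.trans h2)]
    rw [hpdq]
    unfold pd
    apply Real.sqrt_le_sqrt
    simpa [dist_eq_norm] using h3
  · rw [hpdq, hinf, ← Real.sqrt_mul (by norm_num : (2:ℝ) ≥ 0)]
    rw [show (2:ℝ) * (‖n‖ ^ 2 / 2) = ‖n‖ ^ 2 by ring]
    rw [Real.sqrt_sq (norm_nonneg n)]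
end

section
/- Let Y = Y₁ × Y₂ be a product of two CAT(0) metric spaces, let ξ be a point of the visual boundary of Y represented by a unit-speed geodesic ray ρ = (ρ₁, ρ₂) issuing at x = (x₁, x₂), and let β be the Busemann function of ρ. Then the following are equivalent: (a) ρ₂ is constant (ρ stays in Y₁ × {x₂}); (b) β((x₁, y₂)) = β((x₁, x₂)) for all y₂ ∈ Y₂; (c) the ray ρ makes angle π/2 at x with every geodesic from x into {x₁} × Y₂. -/
open Filter Real


/-- The ℓ²-product distance on `Y₁ × Y₂`. -/
noncomputable def pd2 {Y₁ Y₂ : Type*} [MetricSpace Y₁] [MetricSpace Y₂]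
    (a b : Y₁ × Y₂) : ℝ :=
  Real.sqrt (dist a.1 b.1 ^ 2 + dist a.2 b.2 ^ 2)

/-- Every pair of points has a midpoint. -/
def MidpointsExist (Y : Type*) [MetricSpace Y] : Prop :=
  ∀ a b : Y, ∃ m : Y, dist a m = dist a b / 2 ∧ dist m b = dist a b / 2

/-- The CN (Bruhat–Tits) inequality, characterizing CAT(0) spaces among geodesic spaces. -/
def CNIneq (Y : Type*) [MetricSpace Y] : Prop :=
  ∀ x y z m : Y, dist y m = dist y z / 2 → dist m z = dist y z / 2 →
    dist x m ^ 2 ≤ (dist x y ^ 2 + dist x z ^ 2) / 2 - dist y z ^ 2 / 4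

/-- A unit-speed geodesic ray (parametrized on `[0,∞)`) for a given distance function. -/
def IsUnitRay {Y : Type*} (d : Y → Y → ℝ) (γ : ℝ → Y) : Prop :=
  ∀ s t : ℝ, 0 ≤ s → 0 ≤ t → d (γ s) (γ t) = |s - t|

/-- A unit-speed geodesic segment on `[0, L]`. -/
def IsUnitGeodesicOn {Y : Type*} (d : Y → Y → ℝ) (γ : ℝ → Y) (L : ℝ) : Prop :=
  ∀ s t : ℝ, 0 ≤ s → s ≤ L → 0 ≤ t → t ≤ L → d (γ s) (γ t) = |s - t|



private lemma eq_of_sq_eq' {a b : ℝ} (ha : 0 ≤ a) (hb : 0 ≤ b) (h : a ^ 2 = b ^ 2) : a = b := by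
  rcases mul_eq_zero.mp (show (a - b) * (a + b) = 0 by linear_combination h) with h' | h'
  · linarith
  · linarith

private lemma mink {a1 a2 b1 b2 c1 c2 p q : ℝ}
    (ha1 : 0 ≤ a1) (ha2 : 0 ≤ a2) (hb1 : 0 ≤ b1) (hb2 : 0 ≤ b2)
    (hc1 : 0 ≤ c1) (hc2 : 0 ≤ c2) (hp : 0 ≤ p) (hq : 0 ≤ q)
    (hA : a1 ^ 2 + a2 ^ 2 = p ^ 2) (hB : b1 ^ 2 + b2 ^ 2 = q ^ 2)
    (hC : c1 ^ 2 + c2 ^ 2 = (p + q) ^ 2)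
    (t1 : c1 ≤ a1 + b1) (t2 : c2 ≤ a2 + b2) :
    c1 = a1 + b1 ∧ c2 = a2 + b2 ∧ a1 * b2 = a2 * b1 := by
  have hX : 0 ≤ a1 * b1 + a2 * b2 := by positivity
  have hCS : a1 * b1 + a2 * b2 ≤ p * q := by
    nlinarith [sq_nonneg (a1 * b2 - a2 * b1), mul_nonneg hp hq]
  have hsum : (a1 + b1) ^ 2 + (a2 + b2) ^ 2 ≤ (p + q) ^ 2 := by nlinarith
  have h2 : c2 ^ 2 ≤ (a2 + b2) ^ 2 := by nlinarith
  have h1 : c1 ^ 2 ≤ (a1 + b1) ^ 2 := by nlinarith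
  have h1' : (a1 + b1) ^ 2 ≤ c1 ^ 2 := by linarith
  have h2' : (a2 + b2) ^ 2 ≤ c2 ^ 2 := by linarith
  have e1 : c1 = a1 + b1 := eq_of_sq_eq' hc1 (by linarith) (le_antisymm h1 h1')
  have e2 : c2 = a2 + b2 := eq_of_sq_eq' hc2 (by linarith) (le_antisymm h2 h2')
  have hC' : (a1 + b1) ^ 2 + (a2 + b2) ^ 2 = (p + q) ^ 2 := by rw [← e1, ← e2]; exact hC
  have hEq : a1 * b1 + a2 * b2 = p * q := by linear_combination (hC' - hA - hB) / 2
  have hz : (a1 * b2 - a2 * b1) ^ 2 = 0 := by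
    linear_combination q ^ 2 * hA + (a1 ^ 2 + a2 ^ 2) * hB - (a1 * b1 + a2 * b2 + p * q) * hEq
  exact ⟨e1, e2, sub_eq_zero.mp ((pow_eq_zero_iff two_ne_zero).mp hz)⟩


private lemma pd2_sq {Y₁ Y₂ : Type*} [MetricSpace Y₁] [MetricSpace Y₂] (a b : Y₁ × Y₂) :
    pd2 a b ^ 2 = dist a.1 b.1 ^ 2 + dist a.2 b.2 ^ 2 :=
  Real.sq_sqrt (by positivity)

section Ray
variable {Y₁ Y₂ : Type*} [MetricSpace Y₁] [MetricSpace Y₂] {ρ : ℝ → Y₁ × Y₂}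

private lemma ray_sq (hρ : IsUnitRay pd2 ρ) {s t : ℝ} (hs : 0 ≤ s) (ht : 0 ≤ t) :
    dist (ρ s).1 (ρ t).1 ^ 2 + dist (ρ s).2 (ρ t).2 ^ 2 = (s - t) ^ 2 := by
  have h := hρ s t hs ht
  have h2 := pd2_sq (ρ s) (ρ t)
  rw [h, sq_abs] at h2
  exact h2.symm

private lemma ray_step (hρ : IsUnitRay pd2 ρ) {s t u : ℝ} (hs : 0 ≤ s) (hst : s ≤ t)
    (htu : t ≤ u) :
    dist (ρ s).1 (ρ u).1 = dist (ρ s).1 (ρ t).1 + dist (ρ t).1 (ρ u).1 ∧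
    dist (ρ s).2 (ρ u).2 = dist (ρ s).2 (ρ t).2 + dist (ρ t).2 (ρ u).2 ∧
    dist (ρ s).1 (ρ t).1 * dist (ρ t).2 (ρ u).2
      = dist (ρ s).2 (ρ t).2 * dist (ρ t).1 (ρ u).1 := by
  have ht : 0 ≤ t := hs.trans hst
  have hu : 0 ≤ u := ht.trans htu
  have hA := ray_sq hρ hs ht
  have hB := ray_sq hρ ht hu
  have hC := ray_sq hρ hs hu
  rw [show (s - t) ^ 2 = (t - s) ^ 2 by ring] at hA
  rw [show (t - u) ^ 2 = (u - t) ^ 2 by ring] at hB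
  rw [show (s - u) ^ 2 = ((t - s) + (u - t)) ^ 2 by ring] at hC
  exact mink dist_nonneg dist_nonneg dist_nonneg dist_nonneg dist_nonneg dist_nonneg
    (by linarith) (by linarith) hA hB hC
    (dist_triangle (ρ s).1 (ρ t).1 (ρ u).1) (dist_triangle (ρ s).2 (ρ t).2 (ρ u).2)

private lemma ray_lin (hρ : IsUnitRay pd2 ρ) {t : ℝ} (ht : 0 ≤ t) :
    dist (ρ 0).2 (ρ t).2 = dist (ρ 0).2 (ρ 1).2 * t := by
  rcases le_total t 1 with h1 | h1
  · obtain ⟨e1, e2, e3⟩ := ray_step hρ le_rfl ht h1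
    set a1 := dist (ρ 0).1 (ρ t).1
    set a2 := dist (ρ 0).2 (ρ t).2
    set b1 := dist (ρ t).1 (ρ 1).1
    set b2 := dist (ρ t).2 (ρ 1).2
    set c1 := dist (ρ 0).1 (ρ 1).1
    set c := dist (ρ 0).2 (ρ 1).2
    have hA := ray_sq hρ le_rfl ht
    have hF := ray_sq hρ le_rfl (zero_le_one (α := ℝ))
    have hsq : a2 ^ 2 = (c * t) ^ 2 := by
      linear_combination (-(a2 ^ 2)) * hF + c ^ 2 * hA
        - (c * a1 + a2 * c1) * (a1 * e2 - a2 * e1 + e3)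
    exact eq_of_sq_eq' dist_nonneg (mul_nonneg dist_nonneg ht) hsq
  · obtain ⟨e1, e2, e3⟩ := ray_step hρ le_rfl zero_le_one h1
    set a1 := dist (ρ 0).1 (ρ 1).1
    set a2 := dist (ρ 0).2 (ρ 1).2
    set b1 := dist (ρ 1).1 (ρ t).1
    set b2 := dist (ρ 1).2 (ρ t).2
    have hA := ray_sq hρ le_rfl (zero_le_one (α := ℝ))
    have hB := ray_sq hρ (zero_le_one (α := ℝ)) ht
    have hsq : b2 ^ 2 = (a2 * (t - 1)) ^ 2 := by
      linear_combination (-(b2 ^ 2)) * hA + a2 ^ 2 * hB + (a1 * b2 + a2 * b1) * e3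
    have hb2 : b2 = a2 * (t - 1) :=
      eq_of_sq_eq' dist_nonneg (mul_nonneg dist_nonneg (by linarith)) hsq
    rw [e2, hb2]; ring

private lemma ray_dist2 (hρ : IsUnitRay pd2 ρ) {s t : ℝ} (hs : 0 ≤ s) (hst : s ≤ t) :
    dist (ρ s).2 (ρ t).2 = dist (ρ 0).2 (ρ 1).2 * (t - s) := by
  obtain ⟨-, e2, -⟩ := ray_step hρ le_rfl hs hst
  have l1 := ray_lin hρ hs
  have l2 := ray_lin hρ (hs.trans hst)
  rw [l1, l2] at e2
  linarith [e2]

private lemma ray_dist2' (hρ : IsUnitRay pd2 ρ) {s t : ℝ} (hs : 0 ≤ s) (ht : 0 ≤ t) :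
    dist (ρ s).2 (ρ t).2 = dist (ρ 0).2 (ρ 1).2 * |s - t| := by
  rcases le_total s t with h | h
  · rw [ray_dist2 hρ hs h, abs_of_nonpos (by linarith)]; ring
  · rw [dist_comm, ray_dist2 hρ ht h, abs_of_nonneg (by linarith)]

end Ray

private lemma master {E : ℝ} (hE : 0 ≤ E) :
    Tendsto (fun u : ℝ => u - Real.sqrt (u ^ 2 + E)) atTop (nhds 0) := by
  have hlow : Tendsto (fun u : ℝ => -(E / (2 * u))) atTop (nhds 0) := by
    have h := Tendsto.div_atTop (f := fun _ : ℝ => E) (l := atTop)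
      tendsto_const_nhds (Tendsto.const_mul_atTop two_pos tendsto_id)
    simpa using h.neg
  apply tendsto_of_tendsto_of_tendsto_of_le_of_le' hlow tendsto_const_nhds
  · filter_upwards [eventually_gt_atTop 0] with u hu
    have hd : 0 ≤ E / (2 * u) := div_nonneg hE (by linarith)
    have h2 : u ^ 2 + E ≤ (u + E / (2 * u)) ^ 2 := by
      have hmul : 2 * u * (E / (2 * u)) = E := by field_simp
      nlinarith [sq_nonneg (E / (2 * u))]
    have h1 : Real.sqrt (u ^ 2 + E) ≤ u + E / (2 * u) :=
      calc Real.sqrt (u ^ 2 + E) ≤ Real.sqrt ((u + E / (2 * u)) ^ 2) := Real.sqrt_le_sqrt h2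
        _ = u + E / (2 * u) := Real.sqrt_sq (by linarith)
    linarith
  · filter_upwards [eventually_ge_atTop 0] with u hu
    have : u ≤ Real.sqrt (u ^ 2 + E) :=
      calc u = Real.sqrt (u ^ 2) := (Real.sqrt_sq hu).symm
        _ ≤ Real.sqrt (u ^ 2 + E) := Real.sqrt_le_sqrt (by linarith)
    linarith

private lemma master' {b E : ℝ} (hE : 0 ≤ E) :
    Tendsto (fun t : ℝ => t - Real.sqrt ((t - b) ^ 2 + E)) atTop (nhds b) := by
  have h1 : Tendsto (fun t : ℝ => t - b) atTop atTop :=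
    tendsto_atTop_add_const_right atTop (-b) tendsto_id
  have h2 := (master hE).comp h1
  have h3 := h2.add_const b
  rw [zero_add] at h3
  apply h3.congr
  intro t
  simp only [Function.comp_apply]
  ring

/-- Let `Y = Y₁ × Y₂` be a product of two CAT(0) spaces (with the ℓ²-product metric `pd2`),
let `ρ` be a unit-speed geodesic ray issuing at `x = (x₁, x₂)` representing a boundary point
`ξ`, and let `β(y) = lim_{t→∞} (t - d(ρ(t), y))` be its Busemann function (note
`β(x) = 0`).  Then the following are equivalent:
(a) the second component of `ρ` is constant, i.e. `ρ` stays in `Y₁ × {x₂}`;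
(b) `β` is constant (equal to `β(x) = 0`) on the slice `{x₁} × Y₂`, i.e. for every
`y₂ ∈ Y₂` the function `t ↦ t - d(ρ(t), (x₁,y₂))` tends to `0`;
(c) `ρ` makes (Alexandrov) angle `π/2` at `x` with every nonconstant unit-speed geodesic
from `x` into `{x₁} × Y₂`: the comparison angles tend to `π/2` as the parameters tend
to `0` from above. -/
theorem stmt19 {Y₁ Y₂ : Type*} [MetricSpace Y₁] [MetricSpace Y₂]
    (h₁m : MidpointsExist Y₁) (h₂m : MidpointsExist Y₂)
    (h₁c : CNIneq Y₁) (h₂c : CNIneq Y₂)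
    (ρ : ℝ → Y₁ × Y₂) (hρ : IsUnitRay pd2 ρ)
    (x₁ : Y₁) (x₂ : Y₂) (hx : ρ 0 = (x₁, x₂)) :
    List.TFAE
      [ (∀ t : ℝ, 0 ≤ t → (ρ t).2 = x₂),
        (∀ y₂ : Y₂,
          Filter.Tendsto (fun t : ℝ => t - pd2 (ρ t) (x₁, y₂)) Filter.atTop (nhds 0)),
        (∀ (γ₂ : ℝ → Y₂) (L : ℝ), 0 < L → IsUnitGeodesicOn dist γ₂ L → γ₂ 0 = x₂ →
          Filter.Tendsto
            (fun q : ℝ × ℝ =>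
              Real.arccos
                ((q.1 ^ 2 + q.2 ^ 2 - pd2 (ρ q.1) (x₁, γ₂ q.2) ^ 2) / (2 * q.1 * q.2)))
            ((nhdsWithin 0 (Set.Ioi 0)) ×ˢ (nhdsWithin 0 (Set.Ioi 0)))
            (nhds (Real.pi / 2))) ] := by
  have hx1 : (ρ 0).1 = x₁ := by rw [hx]
  have hx2 : (ρ 0).2 = x₂ := by rw [hx]
  obtain ⟨c, hc⟩ : ∃ c, c = dist (ρ 0).2 (ρ 1).2 := ⟨_, rfl⟩
  have hc0 : 0 ≤ c := hc ▸ dist_nonneg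
  have hc1 : c ≤ 1 := by
    have h := ray_sq hρ le_rfl (zero_le_one (α := ℝ))
    rw [← hc] at h
    nlinarith [sq_nonneg (dist (ρ 0).1 (ρ 1).1), dist_nonneg (x := (ρ 0).1) (y := (ρ 1).1)]
  have hzero : c = 0 → ∀ t : ℝ, 0 ≤ t → (ρ t).2 = x₂ := by
    intro hcz t ht
    have h := ray_lin hρ ht
    rw [← hc, hcz, zero_mul] at h
    have h0 : (ρ 0).2 = (ρ t).2 := dist_eq_zero.mp h
    rw [← h0, hx2]
  tfae_have 1 → 2 := by
    intro h1 y₂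
    have hEq : ∀ᶠ t : ℝ in Filter.atTop,
        t - Real.sqrt (t ^ 2 + dist x₂ y₂ ^ 2) = t - pd2 (ρ t) (x₁, y₂) := by
      filter_upwards [Filter.eventually_ge_atTop (0 : ℝ)] with t ht
      have h2 : (ρ t).2 = x₂ := h1 t ht
      have hsq := ray_sq hρ le_rfl ht
      rw [hx2, h2, dist_self] at hsq
      have hf : dist (ρ t).1 x₁ ^ 2 = t ^ 2 := by
        rw [dist_comm, ← hx1]; linear_combination hsq
      have : dist (ρ t).1 (x₁, y₂).1 ^ 2 + dist (ρ t).2 (x₁, y₂).2 ^ 2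
          = t ^ 2 + dist x₂ y₂ ^ 2 := by
        show dist (ρ t).1 x₁ ^ 2 + dist (ρ t).2 y₂ ^ 2 = _
        rw [hf, h2]
      rw [pd2, this]
    exact (master (sq_nonneg (dist x₂ y₂))).congr' hEq
  tfae_have 2 → 1 := by
    intro h2
    have h := h2 ((ρ 1).2)
    have hE : 0 ≤ c ^ 2 - c ^ 4 := by nlinarith [mul_nonneg (sq_nonneg c) (show (0:ℝ) ≤ 1 - c ^ 2 by nlinarith)]
    have hEq : ∀ᶠ t : ℝ in Filter.atTop,
        t - Real.sqrt ((t - c ^ 2) ^ 2 + (c ^ 2 - c ^ 4)) = t - pd2 (ρ t) (x₁, (ρ 1).2) := by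
      filter_upwards [Filter.eventually_ge_atTop (1 : ℝ)] with t ht
      have ht0 : (0 : ℝ) ≤ t := by linarith
      have hsq := ray_sq hρ le_rfl ht0
      have hg : dist (ρ 0).2 (ρ t).2 = c * t := by rw [ray_lin hρ ht0, ← hc]
      have hf : dist (ρ t).1 x₁ ^ 2 = t ^ 2 - (c * t) ^ 2 := by
        rw [dist_comm, ← hx1]
        linear_combination hsq - (dist (ρ 0).2 (ρ t).2 + c * t) * hg
      have hd2 : dist (ρ t).2 (ρ 1).2 = c * (t - 1) := by
        rw [dist_comm, ray_dist2 hρ zero_le_one ht, ← hc]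
      have : dist (ρ t).1 (x₁, (ρ 1).2).1 ^ 2 + dist (ρ t).2 (x₁, (ρ 1).2).2 ^ 2
          = (t - c ^ 2) ^ 2 + (c ^ 2 - c ^ 4) := by
        show dist (ρ t).1 x₁ ^ 2 + dist (ρ t).2 (ρ 1).2 ^ 2 = _
        rw [hf, hd2]; ring
      rw [pd2, this]
    have hsq : c ^ 2 = 0 := tendsto_nhds_unique ((master' (b := c ^ 2) hE).congr' hEq) h
    exact hzero (pow_eq_zero_iff two_ne_zero |>.mp hsq)
  tfae_have 1 → 3 := by
    intro h1 γ₂ L hL hγ hγ0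
    have hev1 : ∀ᶠ r : ℝ in nhdsWithin 0 (Set.Ioi 0), 0 < r := eventually_mem_nhdsWithin
    have hev2 : ∀ᶠ r : ℝ in nhdsWithin 0 (Set.Ioi 0), 0 < r ∧ r ≤ L := by
      have hL' : ∀ᶠ r : ℝ in nhds 0, r ≤ L :=
        (isOpen_Iio.eventually_mem (show (0 : ℝ) ∈ Set.Iio L from hL)).mono
          fun r hr => le_of_lt hr
      exact hev1.and (hL'.filter_mono nhdsWithin_le_nhds)
    apply Filter.Tendsto.congr' _ (tendsto_const_nhds (x := Real.pi / 2))
    filter_upwards [hev1.prod_mk hev2] with q hq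
    obtain ⟨hq1, hq2, hq2L⟩ := hq
    have h2 : (ρ q.1).2 = x₂ := h1 q.1 hq1.le
    have hsq := ray_sq hρ le_rfl hq1.le
    rw [hx2, h2, dist_self] at hsq
    have hf : dist (ρ q.1).1 x₁ ^ 2 = q.1 ^ 2 := by
      rw [dist_comm, ← hx1]; linear_combination hsq
    have hd2 : dist (ρ q.1).2 (γ₂ q.2) = q.2 := by
      rw [h2, ← hγ0, hγ 0 q.2 le_rfl hL.le hq2.le hq2L, zero_sub, abs_neg, abs_of_pos hq2]
    have hpd : pd2 (ρ q.1) (x₁, γ₂ q.2) ^ 2 = q.1 ^ 2 + q.2 ^ 2 := by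
      rw [pd2_sq]
      show dist (ρ q.1).1 x₁ ^ 2 + dist (ρ q.1).2 (γ₂ q.2) ^ 2 = _
      rw [hf, hd2]
    rw [hpd, sub_self, zero_div, Real.arccos_zero]
  tfae_have 3 → 1 := by
    intro h3
    suffices hcz : c = 0 from hzero hcz
    by_contra hne
    have hcpos : 0 < c := lt_of_le_of_ne hc0 (Ne.symm hne)
    set γ₂ : ℝ → Y₂ := fun r => (ρ (r / c)).2 with hγdef
    have hγ : IsUnitGeodesicOn dist γ₂ 1 := by
      intro s t hs hs1 ht ht1
      show dist (ρ (s / c)).2 (ρ (t / c)).2 = _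
      rw [ray_dist2' hρ (div_nonneg hs hcpos.le) (div_nonneg ht hcpos.le), ← hc,
        div_sub_div_same, abs_div, abs_of_pos hcpos, mul_div_cancel₀ _ hcpos.ne']
    have hγ0 : γ₂ 0 = x₂ := by
      show (ρ (0 / c)).2 = x₂
      rw [zero_div, hx2]
    have hT := h3 γ₂ 1 one_pos hγ hγ0
    have hev1 : ∀ᶠ r : ℝ in nhdsWithin 0 (Set.Ioi 0), 0 < r := eventually_mem_nhdsWithin
    have hEq : ∀ᶠ q : ℝ × ℝ in
        (nhdsWithin 0 (Set.Ioi 0)) ×ˢ (nhdsWithin 0 (Set.Ioi 0)),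
        Real.arccos c
          = Real.arccos
              ((q.1 ^ 2 + q.2 ^ 2 - pd2 (ρ q.1) (x₁, γ₂ q.2) ^ 2) / (2 * q.1 * q.2)) := by
      filter_upwards [hev1.prod_mk hev1] with q hq
      obtain ⟨hq1, hq2⟩ := hq
      have hsq := ray_sq hρ le_rfl hq1.le
      have hg : dist (ρ 0).2 (ρ q.1).2 = c * q.1 := by rw [ray_lin hρ hq1.le, ← hc]
      have hf : dist (ρ q.1).1 x₁ ^ 2 = q.1 ^ 2 - (c * q.1) ^ 2 := by
        rw [dist_comm, ← hx1]
        linear_combination hsq - (dist (ρ 0).2 (ρ q.1).2 + c * q.1) * hg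
      have hd2 : dist (ρ q.1).2 (γ₂ q.2) = |c * q.1 - q.2| := by
        show dist (ρ q.1).2 (ρ (q.2 / c)).2 = _
        rw [ray_dist2' hρ hq1.le (div_nonneg hq2.le hcpos.le), ← hc,
          show q.1 - q.2 / c = (c * q.1 - q.2) / c by field_simp,
          abs_div, abs_of_pos hcpos, mul_div_cancel₀ _ hcpos.ne']
      have hpd : pd2 (ρ q.1) (x₁, γ₂ q.2) ^ 2 = q.1 ^ 2 + q.2 ^ 2 - 2 * c * q.1 * q.2 := by
        rw [pd2_sq]
        show dist (ρ q.1).1 x₁ ^ 2 + dist (ρ q.1).2 (γ₂ q.2) ^ 2 = _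
        rw [hf, hd2, sq_abs]; ring
      rw [hpd]
      congr 1
      rw [eq_div_iff (by positivity)]
      ring
    have hval : Real.arccos c = Real.pi / 2 :=
      tendsto_nhds_unique ((tendsto_const_nhds (x := Real.arccos c)).congr' hEq) hT
    have hcos := Real.cos_arccos (by linarith : (-1 : ℝ) ≤ c) hc1
    rw [hval, Real.cos_pi_div_two] at hcos
    exact hne hcos.symm
  tfae_finish
end
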